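/- arXiv:1810.01723 — 11 statements merged into one kernel-verified Lean document; each statement's English description precedes it below -/
import Mathlib

section
/- For every integer M ≥ 1 and every p with 1 ≤ p ≤ M, the coefficient λ_{2p-1}^{2M} := 2(-1)^{p-1}[(2M-1)!!]^2 / ((2M+2p-2)!! (2M-2p)!! (2p-1)) satisfies the normalization identity ∑_{p=1}^{M} λ_{2p-1}^{2M} = 1. -/
open Nat Finset

/-- The coefficient `λ_{2p-1}^{2M}` of the `2M`-th order staggered finite
difference approximation of the first derivative. -/
noncomputable def lamFD (M p : ℕ) : ℝ :=
  2 * (-1 : ℝ) ^ (p - 1) * ((2 * M - 1)‼ : ℝ) ^ 2 /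
    (((2 * M + 2 * p - 2)‼ : ℝ) * ((2 * M - 2 * p)‼ : ℝ) * (2 * p - 1 : ℝ))

/-!
With `F M p := lamFD M p` and `G M p := lamFDCert M p = F M p * p (2p - 1) / (2M (2M + 2p))`,
`(F, G)` is a Wilf–Zeilberger pair: `F (M+1) p - F M p = G M p - G M (p-1)` for `1 ≤ p ≤ M`,
which is a rational identity once `F (M+1) p` and `F M (p-1)` are written as rational multiples
of `F M p`. Summing over `p` telescopes to `G M M`, which cancels the new term `F (M+1) (M+1)`;
hence the sum does not depend on `M`, and for `M = 1` it is `λ_1^2 = 1`.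
-/

theorem lamFD_add_one_add (k j : ℕ) :
    lamFD (k + 1 + j) (k + 1) = 2 * (-1) ^ k * ((2 * k + 2 * j + 1)‼ : ℝ) ^ 2 /
      ((4 * k + 2 * j + 2)‼ * (2 * j)‼ * (2 * k + 1)) := by
  rw [lamFD, show 2 * (k + 1 + j) - 1 = 2 * k + 2 * j + 1 by omega,
    show 2 * (k + 1 + j) + 2 * (k + 1) - 2 = 4 * k + 2 * j + 2 by omega,
    show 2 * (k + 1 + j) - 2 * (k + 1) = 2 * j by omega, Nat.add_sub_cancel]
  push_cast
  ring

theorem lamFD_succ_left {M p : ℕ} (hp : 1 ≤ p) (hpM : p ≤ M) :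
    lamFD (M + 1) p =
      lamFD M p * ((2 * M + 1) ^ 2 / ((2 * M + 2 * p) * (2 * M + 2 - 2 * p))) := by
  obtain ⟨k, rfl⟩ := Nat.exists_eq_add_of_le' hp
  obtain ⟨j, rfl⟩ := Nat.exists_eq_add_of_le hpM
  rw [show k + 1 + j + 1 = k + 1 + (j + 1) by ring, lamFD_add_one_add, lamFD_add_one_add,
    show 2 * k + 2 * (j + 1) + 1 = 2 * k + 2 * j + 1 + 2 by ring,
    show 4 * k + 2 * (j + 1) + 2 = 4 * k + 2 * j + 2 + 2 by ring,
    show 2 * (j + 1) = 2 * j + 2 by ring]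
  simp only [Nat.doubleFactorial_add_two]
  push_cast
  rw [show (2 * ((k : ℝ) + 1 + j) + 2 - 2 * (k + 1)) = 2 * (j + 1) by ring]
  field_simp
  ring

theorem lamFD_succ_right {M p : ℕ} (hp : 1 ≤ p) (hpM : p < M) :
    lamFD M (p + 1) =
      -lamFD M p * ((2 * M - 2 * p) * (2 * p - 1) / ((2 * M + 2 * p) * (2 * p + 1))) := by
  obtain ⟨k, rfl⟩ := Nat.exists_eq_add_of_le' hp
  obtain ⟨j, rfl⟩ := Nat.exists_eq_add_of_lt hpM
  rw [show k + 1 + j + 1 = k + 1 + 1 + j by ring, lamFD_add_one_add,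
    show k + 1 + 1 + j = k + 1 + (j + 1) by ring, lamFD_add_one_add,
    show 2 * k + 2 * (j + 1) + 1 = 2 * (k + 1) + 2 * j + 1 by ring,
    show 4 * (k + 1) + 2 * j + 2 = 4 * k + 2 * (j + 1) + 2 + 2 by ring,
    show 2 * (j + 1) = 2 * j + 2 by ring]
  simp only [Nat.doubleFactorial_add_two]
  push_cast
  rw [show (2 * ((k : ℝ) + 1 + (j + 1)) - 2 * (k + 1)) = 2 * (j + 1) by ring]
  field_simp
  ring

noncomputable def lamFDCert (M p : ℕ) : ℝ :=
  lamFD M p * (p * (2 * p - 1) / (2 * M * (2 * M + 2 * p)))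

theorem lamFDCert_zero (M : ℕ) : lamFDCert M 0 = 0 := by
  simp [lamFDCert]

theorem lamFDCert_eq_of_lt {M k : ℕ} (hk : k < M) :
    lamFDCert M k = -lamFD M (k + 1) * (k * (2 * k + 1) / (2 * M * (2 * M - 2 * k))) := by
  have hMk : (k : ℝ) < M := by exact_mod_cast hk
  cases k with
  | zero => simp [lamFDCert]
  | succ j =>
    rw [lamFDCert, lamFD_succ_right j.succ_pos hk]
    push_cast at hMk ⊢
    have : (M - (j + 1) : ℝ) ≠ 0 := by linarith
    have : (M : ℝ) ≠ 0 := Nat.cast_ne_zero.2 (by omega)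
    field_simp

theorem lamFD_succ_sub_lamFD {M k : ℕ} (hk : k < M) :
    lamFD (M + 1) (k + 1) - lamFD M (k + 1) = lamFDCert M (k + 1) - lamFDCert M k := by
  have hMk : (k : ℝ) < M := by exact_mod_cast hk
  rw [lamFD_succ_left k.succ_pos hk, lamFDCert, lamFDCert_eq_of_lt hk]
  push_cast
  rw [show (2 * M + 2 - 2 * (k + 1) : ℝ) = 2 * M - 2 * k by ring]
  have : (M - k : ℝ) ≠ 0 := by linarith
  have : (M : ℝ) ≠ 0 := Nat.cast_ne_zero.2 (by omega)
  field_simp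
  ring

theorem lamFD_succ_succ {M : ℕ} (hM : 1 ≤ M) : lamFD (M + 1) (M + 1) = -lamFDCert M M := by
  rw [lamFD_succ_right hM M.lt_succ_self, lamFD_succ_left hM le_rfl, lamFDCert]
  push_cast
  field_simp
  ring

theorem sum_range_lamFD_succ_sub_lamFD (M : ℕ) :
    ∑ k ∈ range M, (lamFD (M + 1) (k + 1) - lamFD M (k + 1)) = lamFDCert M M := by
  rw [sum_congr rfl fun k hk => lamFD_succ_sub_lamFD (mem_range.1 hk), sum_range_sub,
    lamFDCert_zero, sub_zero]

theorem sum_range_lamFD (M : ℕ) : ∑ k ∈ range (M + 1), lamFD (M + 1) (k + 1) = 1 := by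
  induction M with
  | zero => norm_num [lamFD]
  | succ M ih =>
    calc ∑ k ∈ range (M + 2), lamFD (M + 2) (k + 1)
        = ∑ k ∈ range (M + 1), lamFD (M + 1) (k + 1)
            + (lamFDCert (M + 1) (M + 1) + lamFD (M + 2) (M + 2)) := by
          rw [sum_range_succ, ← sum_range_lamFD_succ_sub_lamFD, sum_sub_distrib]
          ring
      _ = 1 := by rw [ih, lamFD_succ_succ (Nat.le_add_left 1 M), add_neg_cancel, add_zero]

/-- Normalization identity: `∑_{p=1}^{M} λ_{2p-1}^{2M} = 1`. -/
theorem lamFD_sum_eq_one (M : ℕ) (hM : 1 ≤ M) :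
    ∑ p ∈ Finset.Icc 1 M, lamFD M p = 1 := by
  obtain ⟨M, rfl⟩ := Nat.exists_eq_add_of_le' hM
  rw [← Ico_add_one_right_eq_Icc, ← sum_range_lamFD M, range_eq_Ico, sum_Ico_add' _ 0, zero_add]
end

section
/- For every integer M ≥ 1 and every integer ℓ with 1 ≤ ℓ ≤ M-1, the coefficients λ_{2p-1}^{2M} satisfy the moment-vanishing identity ∑_{p=1}^{M} λ_{2p-1}^{2M} (2p-1)^{2ℓ} = 0. -/
open Nat Finset

lemma key_mono (n : ℕ) : ∀ m : ℕ, m < n →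
    ∑ j ∈ range (n+1), (-1:ℝ)^j * (n.choose j) * (j:ℝ)^m = 0 := by
  induction n with
  | zero => intro m hm; omega
  | succ n ih =>
    intro m hm
    have peel : ∑ j ∈ range (n+1+1), (-1:ℝ)^j * ((n+1).choose j) * (j:ℝ)^m
        = (∑ k ∈ range (n+1), (-1:ℝ)^(k+1) * (((n+1).choose (k+1) : ℕ) : ℝ) * ((k:ℝ)+1)^m)
          + (-1:ℝ)^0 * (((n+1).choose 0 : ℕ) : ℝ) * ((0:ℕ):ℝ)^m := by
      rw [Finset.sum_range_succ']
      push_cast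
      ring_nf
    have split : ∑ k ∈ range (n+1), (-1:ℝ)^(k+1) * (((n+1).choose (k+1):ℕ):ℝ) * ((k:ℝ)+1)^m
        = (∑ k ∈ range (n+1), -((-1:ℝ)^k * (n.choose k) * ((k:ℝ)+1)^m))
          + ∑ k ∈ range (n+1), (-1:ℝ)^(k+1) * (n.choose (k+1)) * ((k:ℝ)+1)^m := by
      rw [← Finset.sum_add_distrib]
      refine Finset.sum_congr rfl fun k _ => ?_
      rw [Nat.choose_succ_succ]
      push_cast
      ring
    have second : (∑ k ∈ range (n+1), (-1:ℝ)^(k+1) * (n.choose (k+1)) * ((k:ℝ)+1)^m)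
          + (-1:ℝ)^0 * (((n+1).choose 0 : ℕ):ℝ) * ((0:ℕ):ℝ)^m
        = ∑ j ∈ range (n+1), (-1:ℝ)^j * (n.choose j) * (j:ℝ)^m := by
      have h1 := Finset.sum_range_succ' (fun j => (-1:ℝ)^j * (n.choose j) * (j:ℝ)^m) (n+1)
      have h2 := Finset.sum_range_succ (fun j => (-1:ℝ)^j * (n.choose j) * (j:ℝ)^m) (n+1)
      simp only [Nat.choose_succ_self, Nat.cast_zero, mul_zero, zero_mul, add_zero] at h2
      push_cast at h1
      rw [← h2, h1]
      simp
    have expand : ∀ k:ℕ, ((k:ℝ)^m - ((k:ℝ)+1)^m) = -∑ i ∈ range m, (k:ℝ)^i * (m.choose i) := by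
      intro k
      have h := add_pow (k:ℝ) 1 m
      simp only [one_pow, mul_one] at h
      rw [h, Finset.sum_range_succ, Nat.choose_self]
      push_cast
      ring
    rw [peel, split, add_assoc, second, ← Finset.sum_add_distrib]
    have hterm : ∀ k ∈ range (n+1),
        -((-1:ℝ)^k * (n.choose k) * ((k:ℝ)+1)^m) + (-1:ℝ)^k * (n.choose k) * (k:ℝ)^m
        = ∑ i ∈ range m, -((m.choose i:ℝ) * ((-1:ℝ)^k * (n.choose k) * (k:ℝ)^i)) := by
      intro k _
      have h : -((-1:ℝ)^k * (n.choose k) * ((k:ℝ)+1)^m) + (-1:ℝ)^k * (n.choose k) * (k:ℝ)^m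
          = (-1:ℝ)^k * (n.choose k) * ((k:ℝ)^m - ((k:ℝ)+1)^m) := by ring
      rw [h, expand k, mul_neg, Finset.mul_sum, ← Finset.sum_neg_distrib]
      refine Finset.sum_congr rfl fun i _ => ?_
      ring
    rw [Finset.sum_congr rfl hterm, Finset.sum_comm]
    refine Finset.sum_eq_zero fun i hi => ?_
    have hin : i < n := by
      have := Finset.mem_range.mp hi; omega
    have h0 := ih i hin
    calc ∑ k ∈ range (n+1), -((m.choose i:ℝ) * ((-1:ℝ)^k * (n.choose k) * (k:ℝ)^i))
        = -((m.choose i:ℝ) * ∑ k ∈ range (n+1), (-1:ℝ)^k * (n.choose k) * (k:ℝ)^i) := by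
          rw [Finset.mul_sum, Finset.sum_neg_distrib]
      _ = 0 := by rw [h0]; ring

lemma key_affine (n m : ℕ) (h : m < n) (x y : ℝ) :
    ∑ j ∈ range (n+1), (-1:ℝ)^j * (n.choose j) * (x + y*j)^m = 0 := by
  have hterm : ∀ j ∈ range (n+1), (-1:ℝ)^j * (n.choose j) * (x + y*j)^m
      = ∑ i ∈ range (m+1), (x^i * y^(m-i) * (m.choose i)) * ((-1:ℝ)^j * (n.choose j) * (j:ℝ)^(m-i)) := by
    intro j _
    rw [add_pow, Finset.mul_sum]
    refine Finset.sum_congr rfl fun i _ => ?_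
    rw [mul_pow]
    ring
  rw [Finset.sum_congr rfl hterm, Finset.sum_comm]
  refine Finset.sum_eq_zero fun i hi => ?_
  have h0 := key_mono n (m - i) (by omega)
  calc ∑ j ∈ range (n+1), (x^i * y^(m-i) * (m.choose i)) * ((-1:ℝ)^j * (n.choose j) * (j:ℝ)^(m-i))
      = (x^i * y^(m-i) * (m.choose i)) * ∑ j ∈ range (n+1), (-1:ℝ)^j * (n.choose j) * (j:ℝ)^(m-i) := by
        rw [Finset.mul_sum]
    _ = 0 := by rw [h0]; ring

/-- Moment-vanishing identity: `∑_{p=1}^{M} λ_{2p-1}^{2M} (2p-1)^{2ℓ} = 0`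
for `1 ≤ ℓ ≤ M - 1`. -/
theorem lamFD_moment_vanish (M : ℕ) (hM : 1 ≤ M) (ℓ : ℕ) (hℓ1 : 1 ≤ ℓ)
    (hℓ2 : ℓ ≤ M - 1) :
    ∑ p ∈ Finset.Icc 1 M, lamFD M p * ((2 * p - 1 : ℝ)) ^ (2 * ℓ) = 0 := by
  have hM2 : 2 ≤ M := by omega
  set C : ℝ := 2 * (((2*M-1)‼ : ℕ):ℝ)^2 / (2^(2*M-1) * (((2*M-1)! : ℕ):ℝ)) with hC
  have hterm : ∀ p ∈ Finset.Icc 1 M, lamFD M p * ((2 * p - 1 : ℝ)) ^ (2 * ℓ)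
      = C * ((-1:ℝ)^(p-1) * (((2*M-1).choose (M-p) : ℕ):ℝ) * (2*(p:ℝ)-1)^(2*ℓ-1)) := by
    intro p hp
    obtain ⟨hp1, hp2⟩ := Finset.mem_Icc.mp hp
    have hA : 2*M + 2*p - 2 = 2*(M+p-1) := by omega
    have hB : 2*M - 2*p = 2*(M-p) := by omega
    have hq1 : (1:ℝ) ≤ (p:ℝ) := by exact_mod_cast hp1
    have hq : (2*(p:ℝ)-1) ≠ 0 := by nlinarith
    have hpowq : (2*(p:ℝ)-1)^(2*ℓ) = (2*(p:ℝ)-1)^(2*ℓ-1) * (2*(p:ℝ)-1) := by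
      rw [← pow_succ]; congr 1; omega
    have hch : ((2*M-1).choose (M-p)) * (M-p)! * (M+p-1)! = (2*M-1)! := by
      have h := Nat.choose_mul_factorial_mul_factorial (show M-p ≤ 2*M-1 by omega)
      have he : 2*M-1-(M-p) = M+p-1 := by omega
      rwa [he] at h
    have hchR : (((2*M-1).choose (M-p) : ℕ):ℝ) * (((M-p)! : ℕ):ℝ) * (((M+p-1)! : ℕ):ℝ)
        = (((2*M-1)! : ℕ):ℝ) := by exact_mod_cast hch
    have hpow2 : (2:ℝ)^(M+p-1) * 2^(M-p) = 2^(2*M-1) := by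
      rw [← pow_add]; congr 1; omega
    have hF1 : (((M+p-1)! : ℕ):ℝ) ≠ 0 := Nat.cast_ne_zero.mpr (Nat.factorial_ne_zero _)
    have hF2 : (((M-p)! : ℕ):ℝ) ≠ 0 := Nat.cast_ne_zero.mpr (Nat.factorial_ne_zero _)
    have hch0 : (((2*M-1).choose (M-p) : ℕ):ℝ) ≠ 0 :=
      Nat.cast_ne_zero.mpr (Nat.choose_pos (show M-p ≤ 2*M-1 by omega)).ne'
    have h2 : (2:ℝ) ≠ 0 := two_ne_zero
    rw [lamFD, hA, hB, Nat.doubleFactorial_two_mul, Nat.doubleFactorial_two_mul, hC]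
    push_cast
    rw [← hchR, ← hpow2, hpowq]
    field_simp
  rw [Finset.sum_congr rfl hterm, ← Finset.mul_sum]
  suffices hT : (∑ p ∈ Finset.Icc 1 M,
      (-1:ℝ)^(p-1) * (((2*M-1).choose (M-p) : ℕ):ℝ) * (2*(p:ℝ)-1)^(2*ℓ-1)) = 0 by
    rw [hT, mul_zero]
  -- the reflected full alternating sum vanishes
  have hV := key_affine (2*M-1) (2*ℓ-1) (by omega) (2*(M:ℝ)-1) (-2)
  have hrange : 2*M-1+1 = 2*M := by omega
  rw [hrange] at hV
  set f : ℕ → ℝ := fun j => (-1:ℝ)^j * (((2*M-1).choose j : ℕ):ℝ)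
      * ((2*(M:ℝ)-1) + (-2)*(j:ℝ))^(2*ℓ-1) with hf
  set T : ℝ := ∑ p ∈ Finset.Icc 1 M,
      (-1:ℝ)^(p-1) * (((2*M-1).choose (M-p) : ℕ):ℝ) * (2*(p:ℝ)-1)^(2*ℓ-1) with hTdef
  have hsplit : (∑ j ∈ range M, f j) + ∑ j ∈ Finset.Ico M (2*M), f j = ∑ j ∈ range (2*M), f j :=
    Finset.sum_range_add_sum_Ico f (by omega)
  have hsign : ∀ p : ℕ, 1 ≤ p → p ≤ M → (-1:ℝ)^(M-1) * (-1:ℝ)^(p-1) = (-1:ℝ)^(M-p) := by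
    intro p hp1 hp2
    rw [← pow_add, show (M-1)+(p-1) = (M-p) + 2*(p-1) by omega, pow_add, pow_mul]
    norm_num
  have hA : ∑ j ∈ range M, f j = (-1:ℝ)^(M-1) * T := by
    rw [hTdef, Finset.mul_sum]
    refine Finset.sum_nbij' (i := fun j => M - j) (j := fun p => M - p) ?_ ?_ ?_ ?_ ?_
    · intro a ha; simp only [Finset.mem_range] at ha; simp only [Finset.mem_Icc]; omega
    · intro a ha; simp only [Finset.mem_Icc] at ha; simp only [Finset.mem_range]; omega
    · intro a ha; simp only [Finset.mem_range] at ha; show M - (M - a) = a; omega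
    · intro a ha; simp only [Finset.mem_Icc] at ha; show M - (M - a) = a; omega
    · intro j hj
      simp only [Finset.mem_range] at hj
      set p := M - j with hpdef
      have hp1 : 1 ≤ p := by omega
      have hp2 : p ≤ M := by omega
      have hMp : M - p = j := by omega
      have hcast : (p:ℝ) = (M:ℝ) - (j:ℝ) := by
        show ((M - j : ℕ) : ℝ) = _
        rw [Nat.cast_sub (le_of_lt hj)]
      have hval : (2*(p:ℝ)-1) = (2*(M:ℝ)-1 + -2*(j:ℝ)) := by linarith
      have hs := hsign p hp1 hp2
      rw [hMp] at hs
      simp only [hf]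
      rw [hval, hMp]
      rw [show (-1:ℝ)^(M-1) * ((-1:ℝ)^(p-1) * (((2*M-1).choose j : ℕ):ℝ)
            * (2*(M:ℝ)-1 + -2*(j:ℝ))^(2*ℓ-1))
          = ((-1:ℝ)^(M-1) * (-1:ℝ)^(p-1)) * ((((2*M-1).choose j : ℕ):ℝ)
            * (2*(M:ℝ)-1 + -2*(j:ℝ))^(2*ℓ-1)) from by ring, hs]
      ring
  have hB : ∑ j ∈ Finset.Ico M (2*M), f j = (-1:ℝ)^(M-1) * T := by
    rw [hTdef, Finset.mul_sum]
    refine Finset.sum_nbij' (i := fun j => j - M + 1) (j := fun p => M + p - 1) ?_ ?_ ?_ ?_ ?_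
    · intro a ha; simp only [Finset.mem_Ico] at ha; simp only [Finset.mem_Icc]; omega
    · intro a ha; simp only [Finset.mem_Icc] at ha; simp only [Finset.mem_Ico]; omega
    · intro a ha; simp only [Finset.mem_Ico] at ha; show M + (a - M + 1) - 1 = a; omega
    · intro a ha; simp only [Finset.mem_Icc] at ha; show M + a - 1 - M + 1 = a; omega
    · intro j hj
      simp only [Finset.mem_Ico] at hj
      set p := j - M + 1 with hpdef
      have hp1 : 1 ≤ p := by omega
      have hp2 : p ≤ M := by omega
      have hch : (2*M-1).choose j = (2*M-1).choose (M-p) := by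
        have h1 : j = 2*M-1 - (M-p) := by omega
        rw [h1, Nat.choose_symm (by omega)]
      have hcast : (p:ℝ) = (j:ℝ) - (M:ℝ) + 1 := by
        show ((j - M + 1 : ℕ) : ℝ) = _
        rw [Nat.cast_add, Nat.cast_sub hj.1, Nat.cast_one]
      have hbase : (2*(M:ℝ)-1 + -2*(j:ℝ)) = -(2*(p:ℝ)-1) := by linarith
      have hodd : Odd (2*ℓ-1) := ⟨ℓ-1, by omega⟩
      have hs : (-1:ℝ)^j = -((-1:ℝ)^(M-1) * (-1:ℝ)^(p-1)) := by
        rw [show j = (M-1)+((p-1)+1) by omega, pow_add, pow_succ]; ring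
      simp only [hf]
      rw [hch, hbase, hodd.neg_pow, hs]
      ring
  rw [hA, hB, hV] at hsplit
  rcases mul_eq_zero.mp (show (-1:ℝ)^(M-1) * (2*T) = 0 by linarith) with h | h
  · exact absurd h (pow_ne_zero _ (by norm_num))
  · linarith
end

section
/- For every integer M ≥ 1, the coefficients λ_{2p-1}^{2M} satisfy ∑_{p=1}^{M} λ_{2p-1}^{2M} (2p-1)^{2M} = (-1)^{M+1} [(2M-1)!!]^2. -/
/-!
Write `M = m + 1` and `n = 2m + 1`. Expressing the even double factorials through factorials turns
the `p = q + 1` term of the sum into `(-1)^m ((2M-1)‼)² / (4^m n!)` times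
`(-1)^(m-q) C(n, m+1+q) (2q+1)^n`. The sum of these over `q ≤ m` is the upper half of
`∑_k (-1)^(n-k) C(n,k) (2k-n)^n`, the `n`-th forward difference of `x ↦ (2x-n)^n`, which equals
`2^n n!`; as `n` is odd the two halves agree, so the half sum is `4^m n!`.
-/

open Nat Finset

theorem sum_neg_one_pow_mul_choose_mul_add_pow {R : Type*} [CommRing R] (n : ℕ) (a : R) :
    ∑ k ∈ range (n + 1), (-1 : R) ^ (n - k) * n.choose k * (k + a) ^ n = n ! := by
  have h := fwdDiff_iter_comp_add (h := (1 : R)) (fun r => r ^ n) a n 0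
  rw [fwdDiff_iter_eq_factorial, fwdDiff_iter_eq_sum_shift] at h
  simpa [zsmul_eq_mul] using h

theorem sum_neg_one_pow_mul_choose_mul_two_mul_sub_pow {K : Type*} [Field K] [CharZero K]
    (n : ℕ) :
    ∑ k ∈ range (n + 1), (-1 : K) ^ (n - k) * n.choose k * (2 * k - n) ^ n = 2 ^ n * n ! := by
  rw [← sum_neg_one_pow_mul_choose_mul_add_pow n (-(n / 2) : K), mul_sum]
  refine sum_congr rfl fun k _ => ?_
  rw [show (2 * k - n : K) = 2 * (k + -(n / 2)) by ring, mul_pow]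
  ring

theorem Finset.sum_range_add_self_of_reflect {M : Type*} [AddCommMonoid M] (f : ℕ → M) (m : ℕ)
    (h : ∀ k < m, f (m - 1 - k) = f (m + k)) :
    ∑ k ∈ range (m + m), f k = 2 • ∑ k ∈ range m, f (m + k) := by
  rw [sum_range_add, ← sum_range_reflect, two_nsmul]
  congr 1
  exact sum_congr rfl fun k hk => h k (mem_range.mp hk)

theorem sum_range_neg_one_pow_mul_choose_mul_odd_pow (m : ℕ) :
    ∑ q ∈ range (m + 1), (-1 : ℝ) ^ (m - q) * (2 * m + 1).choose (m + 1 + q) *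
      (2 * q + 1 : ℝ) ^ (2 * m + 1) = 4 ^ m * (2 * m + 1)! := by
  have hupper (q : ℕ) (hq : q ≤ m) :
      (-1 : ℝ) ^ (2 * m + 1 - (m + 1 + q)) * (2 * m + 1).choose (m + 1 + q) *
        (2 * (m + 1 + q : ℕ) - (2 * m + 1 : ℕ) : ℝ) ^ (2 * m + 1) =
      (-1 : ℝ) ^ (m - q) * (2 * m + 1).choose (m + 1 + q) * (2 * q + 1 : ℝ) ^ (2 * m + 1) := by
    rw [show 2 * m + 1 - (m + 1 + q) = m - q by omega]
    push_cast
    ring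
  -- `2m+1` is odd, so the summand is invariant under `k ↦ 2m+1-k`: the sum is twice its upper half.
  have hsum := sum_neg_one_pow_mul_choose_mul_two_mul_sub_pow (K := ℝ) (2 * m + 1)
  rw [show 2 * m + 1 + 1 = (m + 1) + (m + 1) by omega, sum_range_add_self_of_reflect _ _ ?reflect,
    sum_congr rfl fun q hq => hupper q (Nat.lt_succ_iff.mp (mem_range.mp hq)), nsmul_eq_mul,
    pow_succ, pow_mul] at hsum
  · norm_num at hsum
    linarith
  case reflect =>
    intro q hq
    obtain ⟨r, rfl⟩ := Nat.exists_eq_add_of_le (Nat.lt_succ_iff.mp hq)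
    rw [hupper q (by omega), ← choose_symm (by omega), show q + r + 1 - 1 - q = r by omega,
      show 2 * (q + r) + 1 - r = 2 * q + r + 1 by omega, show q + r - q = r by omega,
      show q + r + 1 + q = 2 * q + r + 1 by omega]
    push_cast
    rw [show (2 * (r : ℝ) - (2 * (q + r) + 1)) = -(2 * q + 1) by ring,
      (odd_two_mul_add_one (q + r)).neg_pow]
    simp only [pow_add, pow_mul]
    norm_num

theorem lamFD_succ_succ_s2 (m q : ℕ) (hq : q ≤ m) :
    lamFD (m + 1) (q + 1) = (-1) ^ q * ((2 * (m + 1) - 1)‼ : ℝ) ^ 2 /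
      (4 ^ m * (m + 1 + q)! * (m - q)! * (2 * q + 1)) := by
  rw [lamFD, show 2 * (m + 1) + 2 * (q + 1) - 2 = 2 * (m + 1 + q) by omega,
    show 2 * (m + 1) - 2 * (q + 1) = 2 * (m - q) by omega, doubleFactorial_two_mul,
    doubleFactorial_two_mul, add_tsub_cancel_right]
  push_cast
  rw [show 2 * ((q : ℝ) + 1) - 1 = 2 * q + 1 by ring]
  field_simp
  rw [← pow_add, show m + 1 + q + (m - q) = 2 * m + 1 by omega, pow_succ, pow_mul]
  norm_num
  ring

theorem lamFD_succ_succ_mul_pow (m q : ℕ) (hq : q ≤ m) :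
    lamFD (m + 1) (q + 1) * (2 * ((q + 1 : ℕ) : ℝ) - 1) ^ (2 * (m + 1)) =
      (-1) ^ m * ((2 * (m + 1) - 1)‼ : ℝ) ^ 2 / (4 ^ m * (2 * m + 1)!) *
        ((-1) ^ (m - q) * (2 * m + 1).choose (m + 1 + q) * (2 * q + 1 : ℝ) ^ (2 * m + 1)) := by
  obtain ⟨r, rfl⟩ := Nat.exists_eq_add_of_le hq
  rw [lamFD_succ_succ_s2 _ _ hq, cast_choose ℝ (by omega),
    show 2 * (q + r) + 1 - (q + r + 1 + q) = r by omega, add_tsub_cancel_left]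
  push_cast
  have hsign : (-1 : ℝ) ^ r * (-1) ^ r = 1 := by rw [← pow_add, ← two_mul, pow_mul]; norm_num
  rw [show 2 * ((q : ℝ) + 1) - 1 = 2 * q + 1 by ring]
  field_simp
  rw [pow_add (-1 : ℝ) q r, show 2 * (q + r + 1) = 2 * (q + r) + 1 + 1 by ring, pow_succ]
  linear_combination -(-1 : ℝ) ^ q * (2 * q + 1) * (2 * q + 1 : ℝ) ^ (2 * (q + r) + 1) * hsign

/-- Top-moment identity:
`∑_{p=1}^{M} λ_{2p-1}^{2M} (2p-1)^{2M} = (-1)^{M+1} [(2M-1)!!]²`. -/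
theorem lamFD_top_moment (M : ℕ) (hM : 1 ≤ M) :
    ∑ p ∈ Finset.Icc 1 M, lamFD M p * ((2 * p - 1 : ℝ)) ^ (2 * M) =
      (-1 : ℝ) ^ (M + 1) * ((2 * M - 1)‼ : ℝ) ^ 2 := by
  obtain ⟨m, rfl⟩ := Nat.exists_eq_add_of_le' hM
  rw [← Ico_add_one_right_eq_Icc, sum_Ico_eq_sum_range, add_tsub_cancel_right]
  rw [sum_congr rfl fun q hq => by
    rw [add_comm 1 q, lamFD_succ_succ_mul_pow m q (Nat.lt_succ_iff.mp (mem_range.mp hq))],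
    ← mul_sum, sum_range_neg_one_pow_mul_choose_mul_odd_pow]
  field_simp
  ring
end

section
/- For every integer M ≥ 1 and real θ, the identity 2 ∑_{p=1}^{M} (λ_{2p-1}^{2M}/(2p-1)) sin((2p-1)θ) = 2 ∑_{p=1}^{M} ([(2p-3)!!]^2/(2p-1)!) sin^{2p-1}(θ) holds, where λ_{2p-1}^{2M} = 2(-1)^{p-1}[(2M-1)!!]^2 / ((2M+2p-2)!! (2M-2p)!! (2p-1)). -/
open Nat Finset Real

noncomputable def acoef (n k : ℕ) : ℝ :=
  if k ≤ n then (-1 : ℝ) ^ k * ((2 * n + 1).choose (n - k)) else 0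

lemma acoef_of_le {n k : ℕ} (h : k ≤ n) :
    acoef n k = (-1 : ℝ) ^ k * ((2 * n + 1).choose (n - k)) := if_pos h

lemma acoef_of_gt {n k : ℕ} (h : n < k) : acoef n k = 0 := if_neg (by omega)

lemma pascal2 (m e : ℕ) :
    (m + 2).choose (e + 2) = m.choose e + 2 * m.choose (e + 1) + m.choose (e + 2) := by
  have h1 := Nat.choose_succ_succ (m + 1) (e + 1)
  have h2 := Nat.choose_succ_succ m e
  have h3 := Nat.choose_succ_succ m (e + 1)
  simp only [Nat.succ_eq_add_one] at h1 h2 h3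
  have h4 : e + 1 + 1 = e + 2 := by omega
  have h5 : m + 1 + 1 = m + 2 := by omega
  rw [h4, h5] at h1
  rw [h4] at h3
  omega

lemma acoef_rec (n j : ℕ) :
    acoef (n + 1) j
      = 2 * acoef n j - (if j = 0 then -(acoef n 0) else acoef n (j - 1)) - acoef n (j + 1) := by
  rcases j with _ | i
  · -- j = 0
    simp only [if_pos rfl]
    rcases n with _ | m
    · rw [acoef_of_le (by omega), acoef_of_le (by omega), acoef_of_gt (by omega)]
      norm_num
    · have hN : (2 * (m + 1 + 1) + 1).choose (m + 1 + 1 - 0)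
          = 3 * (2 * (m + 1) + 1).choose (m + 1 - 0) + (2 * (m + 1) + 1).choose (m + 1 - 1) := by
        have h1 := pascal2 (2 * m + 3) m
        have h2 : (2 * m + 3).choose (2 * m + 3 - (m + 2)) = (2 * m + 3).choose (m + 2) :=
          Nat.choose_symm (by omega)
        have h3 : 2 * m + 3 - (m + 2) = m + 1 := by omega
        rw [h3] at h2
        have h4 : 2 * (m + 1 + 1) + 1 = 2 * m + 3 + 2 := by ring
        have h5 : m + 1 + 1 - 0 = m + 2 := by omega
        have h6 : 2 * (m + 1) + 1 = 2 * m + 3 := by ring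
        have h7 : m + 1 - 0 = m + 1 := by omega
        have h8 : m + 1 - 1 = m := by omega
        rw [h4, h5, h6, h7, h8, h1, h2]; ring
      rw [acoef_of_le (by omega), acoef_of_le (by omega), acoef_of_le (by omega), hN]
      have h9 : m + 1 - (0 + 1) = m := by omega
      rw [h9]
      push_cast
      ring
  · -- j = i + 1
    simp only [if_neg (Nat.succ_ne_zero i), Nat.succ_sub_one]
    rcases Nat.lt_or_ge n i with h | h
    · rw [acoef_of_gt (by omega), acoef_of_gt (by omega), acoef_of_gt (by omega),
        acoef_of_gt (by omega)]
      ring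
    · rcases Nat.eq_or_lt_of_le h with rfl | h1
      · -- i = n
        rw [acoef_of_le (by omega), acoef_of_gt (by omega), acoef_of_le (le_refl _),
          acoef_of_gt (by omega)]
        have e1 : i + 1 - (i + 1) = 0 := by omega
        have e2 : i - i = 0 := by omega
        rw [e1, e2]
        simp [pow_succ]
      · rcases Nat.eq_or_lt_of_le h1 with hh | h2
        · -- n = i + 1
          obtain rfl : n = i + 1 := hh.symm
          rw [acoef_of_le (by omega), acoef_of_le (by omega), acoef_of_le (by omega),
            acoef_of_gt (by omega)]
          have e1 : i + 1 + 1 - (i + 1) = 1 := by omega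
          have e2 : i + 1 - (i + 1) = 0 := by omega
          have e3 : i + 1 - i = 1 := by omega
          rw [e1, e2, e3]
          simp only [Nat.choose_one_right, Nat.choose_zero_right]
          push_cast
          ring
        · -- i + 2 ≤ n : set n = i + 2 + e
          obtain ⟨e, rfl⟩ : ∃ e, n = i + 2 + e := ⟨n - (i + 2), by omega⟩
          rw [acoef_of_le (by omega), acoef_of_le (by omega), acoef_of_le (by omega),
            acoef_of_le (by omega)]
          have e1 : i + 2 + e + 1 - (i + 1) = e + 2 := by omega
          have e2 : i + 2 + e - (i + 1) = e + 1 := by omega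
          have e3 : i + 2 + e - i = e + 2 := by omega
          have e4 : i + 2 + e - (i + 1 + 1) = e := by omega
          rw [e1, e2, e3, e4]
          have hN : (2 * (i + 2 + e + 1) + 1).choose (e + 2)
              = (2 * (i + 2 + e) + 1).choose e + 2 * (2 * (i + 2 + e) + 1).choose (e + 1)
                + (2 * (i + 2 + e) + 1).choose (e + 2) := by
            have h1 := pascal2 (2 * (i + 2 + e) + 1) e
            have h4 : 2 * (i + 2 + e + 1) + 1 = 2 * (i + 2 + e) + 1 + 2 := by ring
            rw [h4, h1]
          rw [hN]
          push_cast
          ring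

lemma shuffle (n : ℕ) (g : ℕ → ℝ) (h0 : g 0 = -g 1) :
    ∑ k ∈ Finset.range (n + 1), acoef n k * (2 * g (k + 1) - g (k + 2) - g k)
      = ∑ k ∈ Finset.range (n + 2), acoef (n + 1) k * g (k + 1) := by
  have hR : ∑ k ∈ Finset.range (n + 2), acoef (n + 1) k * g (k + 1)
      = ∑ k ∈ Finset.range (n + 2), (2 * acoef n k * g (k + 1)
          - (if k = 0 then -(acoef n 0) else acoef n (k - 1)) * g (k + 1)
          - acoef n (k + 1) * g (k + 1)) := by
    refine Finset.sum_congr rfl fun k _ => ?_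
    rw [acoef_rec]; ring
  rw [hR, Finset.sum_sub_distrib, Finset.sum_sub_distrib]
  have hA : ∑ k ∈ Finset.range (n + 2), 2 * acoef n k * g (k + 1)
      = ∑ k ∈ Finset.range (n + 1), 2 * acoef n k * g (k + 1) := by
    rw [Finset.sum_range_succ, acoef_of_gt (by omega)]; ring
  have hB : ∑ k ∈ Finset.range (n + 2),
        (if k = 0 then -(acoef n 0) else acoef n (k - 1)) * g (k + 1)
      = ∑ k ∈ Finset.range (n + 1), acoef n k * g (k + 2) - acoef n 0 * g 1 := by
    rw [Finset.sum_range_succ'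
      (fun k => (if k = 0 then -(acoef n 0) else acoef n (k - 1)) * g (k + 1)) (n + 1)]
    simp only [Nat.succ_ne_zero, if_neg, if_pos, Nat.succ_sub_one, reduceIte]
    ring
  have hC : ∑ k ∈ Finset.range (n + 2), acoef n (k + 1) * g (k + 1)
      = ∑ k ∈ Finset.range (n + 1), acoef n k * g k + acoef n 0 * g 1 := by
    rw [Finset.sum_range_succ, Finset.sum_range_succ, acoef_of_gt (show n < n + 1 by omega),
      acoef_of_gt (show n < n + 2 by omega),
      Finset.sum_range_succ' (fun k => acoef n k * g k) n, h0]
    ring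
  rw [hA, hB, hC]
  have hL : ∑ k ∈ Finset.range (n + 1), acoef n k * (2 * g (k + 1) - g (k + 2) - g k)
      = ∑ k ∈ Finset.range (n + 1), (2 * acoef n k * g (k + 1) - acoef n k * g (k + 2)
          - acoef n k * g k) := by
    refine Finset.sum_congr rfl fun k _ => ?_; ring
  rw [hL, Finset.sum_sub_distrib, Finset.sum_sub_distrib]
  ring

lemma trig (a θ : ℝ) :
    Real.sin (a * θ) * (Real.sin θ ^ 2 * 4)
      = 2 * Real.sin (a * θ) - Real.sin ((a + 2) * θ) - Real.sin ((a - 2) * θ) := by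
  have h1 : (a + 2) * θ = a * θ + 2 * θ := by ring
  have h2 : (a - 2) * θ = a * θ - 2 * θ := by ring
  rw [h1, h2, Real.sin_add, Real.sin_sub, Real.cos_two_mul, Real.sin_two_mul]
  have h3 := Real.sin_sq_add_cos_sq θ
  linear_combination (4 * Real.sin (a * θ)) * h3

lemma sin_pow_odd (θ : ℝ) : ∀ n : ℕ,
    Real.sin θ ^ (2 * n + 1) * 4 ^ n
      = ∑ k ∈ Finset.range (n + 1), acoef n k * Real.sin ((2 * (k : ℝ) + 1) * θ)
  | 0 => by
    rw [Finset.sum_range_one, acoef_of_le (le_refl 0)]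
    norm_num
  | (n + 1) => by
    have ih := sin_pow_odd θ n
    have key := shuffle n (fun j => Real.sin ((2 * (j : ℝ) - 1) * θ)) (by norm_num)
    calc Real.sin θ ^ (2 * (n + 1) + 1) * 4 ^ (n + 1)
        = (Real.sin θ ^ (2 * n + 1) * 4 ^ n) * (Real.sin θ ^ 2 * 4) := by ring
      _ = (∑ k ∈ Finset.range (n + 1), acoef n k * Real.sin ((2 * (k : ℝ) + 1) * θ))
            * (Real.sin θ ^ 2 * 4) := by rw [ih]
      _ = ∑ k ∈ Finset.range (n + 1), acoef n k *
            (2 * Real.sin ((2 * ((k : ℝ) + 1) - 1) * θ)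
              - Real.sin ((2 * ((k : ℝ) + 2) - 1) * θ)
              - Real.sin ((2 * (k : ℝ) - 1) * θ)) := by
          rw [Finset.sum_mul]
          refine Finset.sum_congr rfl fun k _ => ?_
          have ht := trig (2 * (k : ℝ) + 1) θ
          have e1 : (2 * (k : ℝ) + 1 + 2) = 2 * ((k : ℝ) + 2) - 1 := by ring
          have e2 : (2 * (k : ℝ) + 1 - 2) = 2 * (k : ℝ) - 1 := by ring
          have e3 : (2 * (k : ℝ) + 1) = 2 * ((k : ℝ) + 1) - 1 := by ring
          rw [e1, e2] at ht
          rw [mul_assoc, ht, e3]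
      _ = ∑ k ∈ Finset.range (n + 2), acoef (n + 1) k * Real.sin ((2 * (k : ℝ) + 1) * θ) := by
          rw [show (∑ k ∈ Finset.range (n + 1), acoef n k *
              (2 * Real.sin ((2 * ((k : ℝ) + 1) - 1) * θ)
                - Real.sin ((2 * ((k : ℝ) + 2) - 1) * θ)
                - Real.sin ((2 * (k : ℝ) - 1) * θ)))
            = ∑ k ∈ Finset.range (n + 1), acoef n k *
              (2 * (fun j : ℕ => Real.sin ((2 * (j : ℝ) - 1) * θ)) (k + 1)
                - (fun j : ℕ => Real.sin ((2 * (j : ℝ) - 1) * θ)) (k + 2)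
                - (fun j : ℕ => Real.sin ((2 * (j : ℝ) - 1) * θ)) k) from
            Finset.sum_congr rfl fun k _ => by push_cast; ring_nf]
          rw [key]
          refine Finset.sum_congr rfl fun k _ => ?_
          push_cast
          ring_nf

lemma lam_diff (M p : ℕ) (h1 : 1 ≤ p) (hpM : p ≤ M) :
    lamFD (M + 1) p / (2 * (p : ℝ) - 1)
      = lamFD M p / (2 * (p : ℝ) - 1)
        + ((2 * M - 1)‼ : ℝ) ^ 2 / ((2 * M + 1)! : ℝ) / 4 ^ M
          * ((-1 : ℝ) ^ (p - 1) * ((2 * M + 1).choose (M + 1 - p) : ℝ)) := by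
  obtain ⟨k, rfl⟩ : ∃ k, p = k + 1 := ⟨p - 1, by omega⟩
  obtain ⟨d, rfl⟩ : ∃ d, M = k + 1 + d := ⟨M - (k + 1), by omega⟩
  unfold lamFD
  have e1 : 2 * (k + 1 + d) - 1 = 2 * (k + d) + 1 := by omega
  have e2 : 2 * (k + 1 + d) + 2 * (k + 1) - 2 = 2 * (2 * k + d + 1) := by omega
  have e3 : 2 * (k + 1 + d) - 2 * (k + 1) = 2 * d := by omega
  have e4 : 2 * (k + 1 + d + 1) - 1 = 2 * (k + d) + 1 + 2 := by omega
  have e5 : 2 * (k + 1 + d + 1) + 2 * (k + 1) - 2 = 2 * (2 * k + d + 2) := by omega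
  have e6 : 2 * (k + 1 + d + 1) - 2 * (k + 1) = 2 * (d + 1) := by omega
  have e7 : k + 1 + d + 1 - (k + 1) = d + 1 := by omega
  have e8 : k + 1 - 1 = k := by omega
  rw [e1, e2, e3, e4, e5, e6, e7, e8]
  rw [Nat.doubleFactorial_add_two]
  rw [Nat.doubleFactorial_two_mul, Nat.doubleFactorial_two_mul, Nat.doubleFactorial_two_mul,
    Nat.doubleFactorial_two_mul]
  rw [Nat.cast_choose ℝ (show d + 1 ≤ 2 * (k + 1 + d) + 1 by omega)]
  have e9 : 2 * (k + 1 + d) + 1 - (d + 1) = 2 * k + d + 2 := by omega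
  rw [e9]
  have f1 : (2 * k + d + 2)! = (2 * k + d + 2) * (2 * k + d + 1)! := Nat.factorial_succ _
  have f2 : (d + 1)! = (d + 1) * d ! := Nat.factorial_succ _
  have f3 : (2 * k + d + 1 + 1)! = (2 * k + d + 2) * (2 * k + d + 1)! := by
    rw [Nat.factorial_succ]
  have f4 : (d + 1 + 1)! = (d + 2) * ((d + 1) * d !) := by
    rw [Nat.factorial_succ, Nat.factorial_succ]
  rw [f1, f2]
  have hA : ((2 * (k + d) + 1)‼ : ℝ) ≠ 0 :=
    Nat.cast_ne_zero.mpr (Nat.doubleFactorial_pos _).ne'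
  have hF1 : ((2 * k + d + 1)! : ℝ) ≠ 0 := Nat.cast_ne_zero.mpr (Nat.factorial_pos _).ne'
  have hF2 : ((d)! : ℝ) ≠ 0 := Nat.cast_ne_zero.mpr (Nat.factorial_pos _).ne'
  have hF3 : ((2 * (k + 1 + d) + 1)! : ℝ) ≠ 0 := Nat.cast_ne_zero.mpr (Nat.factorial_pos _).ne'
  have hp2 : ((2:ℝ)) ≠ 0 := two_ne_zero
  have hk1 : (2 * ((k:ℝ) + 1) - 1) ≠ 0 := by
    have : (0:ℝ) < 2 * ((k:ℝ) + 1) - 1 := by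
      have : (0:ℝ) ≤ (k:ℝ) := Nat.cast_nonneg k
      linarith
    exact this.ne'
  have hcast : ((k:ℝ) + 1) = ((k + 1 : ℕ) : ℝ) := by push_cast; ring
  rw [show (4:ℝ) ^ (k + 1 + d) = 2 ^ (2 * (k + 1 + d)) by
    rw [show (4:ℝ) = 2 ^ 2 by norm_num, ← pow_mul]]
  push_cast
  field_simp
  ring

lemma lam_last (M : ℕ) (hM : 1 ≤ M) :
    lamFD (M + 1) (M + 1) / (2 * ((M + 1 : ℕ) : ℝ) - 1)
      = ((2 * M - 1)‼ : ℝ) ^ 2 / ((2 * M + 1)! : ℝ) / 4 ^ M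
        * ((-1 : ℝ) ^ (M + 1 - 1) * ((2 * M + 1).choose (M + 1 - (M + 1)) : ℝ)) := by
  obtain ⟨m, rfl⟩ : ∃ m, M = m + 1 := ⟨M - 1, by omega⟩
  unfold lamFD
  have e1 : 2 * (m + 1 + 1) - 1 = 2 * m + 1 + 2 := by omega
  have e2 : 2 * (m + 1 + 1) + 2 * (m + 1 + 1) - 2 = 2 * (2 * m + 3) := by omega
  have e3 : 2 * (m + 1 + 1) - 2 * (m + 1 + 1) = 0 := by omega
  have e4 : m + 1 + 1 - 1 = m + 1 := by omega
  have e5 : m + 1 + 1 - (m + 1 + 1) = 0 := by omega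
  have e6 : 2 * (m + 1) - 1 = 2 * m + 1 := by omega
  rw [e1, e2, e3, e4, e5, e6]
  rw [Nat.doubleFactorial_add_two, Nat.doubleFactorial_two_mul, Nat.choose_zero_right,
    show (0:ℕ)‼ = 1 from rfl]
  have f1 : (2 * (m + 1) + 1)! = (2 * m + 3)! := by rw [show 2*(m+1)+1 = 2*m+3 by ring]
  have f2 : (2 * m + 3)! = (2 * m + 3) * ((2 * m + 2) * (2 * m + 1)!) := by
    rw [show 2 * m + 3 = (2 * m + 2) + 1 by omega, Nat.factorial_succ,
      show 2 * m + 2 = (2 * m + 1) + 1 by omega, Nat.factorial_succ]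
  rw [f1, f2]
  have hA : ((2 * m + 1)‼ : ℝ) ≠ 0 := Nat.cast_ne_zero.mpr (Nat.doubleFactorial_pos _).ne'
  have hF : ((2 * m + 3)! : ℝ) ≠ 0 := Nat.cast_ne_zero.mpr (Nat.factorial_pos _).ne'
  have hF1 : ((2 * m + 1)! : ℝ) ≠ 0 := Nat.cast_ne_zero.mpr (Nat.factorial_pos _).ne'
  have hm1 : (2 * ((m : ℝ) + 1 + 1) - 1) ≠ 0 := by
    have : (0 : ℝ) ≤ (m : ℝ) := Nat.cast_nonneg m
    intro h; nlinarith
  rw [show (4:ℝ) ^ (m + 1) = 2 ^ (2 * (m + 1)) by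
    rw [show (4:ℝ) = 2 ^ 2 by norm_num, ← pow_mul]]
  push_cast
  field_simp
  ring

lemma main_aux (M : ℕ) (hM : 1 ≤ M) (θ : ℝ) :
    ∑ p ∈ Finset.Icc 1 M,
        lamFD M p / (2 * p - 1 : ℝ) * Real.sin ((2 * p - 1 : ℝ) * θ)
      = ∑ p ∈ Finset.Icc 1 M,
        ((2 * p - 3)‼ : ℝ) ^ 2 / ((2 * p - 1)! : ℝ) * Real.sin θ ^ (2 * p - 1) := by
  induction M, hM using Nat.le_induction with
  | base =>
      rw [Finset.Icc_self, Finset.sum_singleton, Finset.sum_singleton]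
      norm_num [lamFD, Nat.doubleFactorial]
  | succ M hM ih =>
      rw [Finset.sum_Icc_succ_top (by omega : (1:ℕ) ≤ M + 1),
        Finset.sum_Icc_succ_top (by omega : (1:ℕ) ≤ M + 1)]
      have hsplit : ∀ p ∈ Finset.Icc 1 M,
          lamFD (M + 1) p / (2 * p - 1 : ℝ) * Real.sin ((2 * p - 1 : ℝ) * θ)
            = lamFD M p / (2 * p - 1 : ℝ) * Real.sin ((2 * p - 1 : ℝ) * θ)
              + ((2 * M - 1)‼ : ℝ) ^ 2 / ((2 * M + 1)! : ℝ) / 4 ^ M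
                * ((-1 : ℝ) ^ (p - 1) * ((2 * M + 1).choose (M + 1 - p) : ℝ))
                * Real.sin ((2 * p - 1 : ℝ) * θ) := by
        intro p hp
        rw [Finset.mem_Icc] at hp
        rw [lam_diff M p hp.1 hp.2]
        ring
      rw [Finset.sum_congr rfl hsplit, Finset.sum_add_distrib, ih]
      have hlast : lamFD (M + 1) (M + 1) / (2 * ((M + 1 : ℕ) : ℝ) - 1)
            * Real.sin ((2 * ((M + 1 : ℕ) : ℝ) - 1) * θ)
          = ((2 * M - 1)‼ : ℝ) ^ 2 / ((2 * M + 1)! : ℝ) / 4 ^ M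
            * ((-1 : ℝ) ^ ((M + 1) - 1) * ((2 * M + 1).choose (M + 1 - (M + 1)) : ℝ))
            * Real.sin ((2 * ((M + 1 : ℕ) : ℝ) - 1) * θ) := by
        rw [lam_last M hM]
      rw [add_assoc]
      congr 1
      rw [hlast]
      rw [← Finset.sum_Icc_succ_top (by omega : (1:ℕ) ≤ M + 1)
        (fun p => ((2 * M - 1)‼ : ℝ) ^ 2 / ((2 * M + 1)! : ℝ) / 4 ^ M
          * ((-1 : ℝ) ^ (p - 1) * ((2 * M + 1).choose (M + 1 - p) : ℝ))
          * Real.sin ((2 * (p : ℝ) - 1) * θ))]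
      rw [← Finset.Ico_add_one_right_eq_Icc, Finset.sum_Ico_eq_sum_range]
      have hred : M + 1 + 1 - 1 = M + 1 := by omega
      rw [hred]
      have hsum : ∑ k ∈ Finset.range (M + 1),
            ((2 * M - 1)‼ : ℝ) ^ 2 / ((2 * M + 1)! : ℝ) / 4 ^ M
              * ((-1 : ℝ) ^ ((1 + k) - 1) * ((2 * M + 1).choose (M + 1 - (1 + k)) : ℝ))
              * Real.sin ((2 * ((1 + k : ℕ) : ℝ) - 1) * θ)
          = ((2 * M - 1)‼ : ℝ) ^ 2 / ((2 * M + 1)! : ℝ) / 4 ^ M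
            * ∑ k ∈ Finset.range (M + 1), acoef M k * Real.sin ((2 * (k : ℝ) + 1) * θ) := by
        rw [Finset.mul_sum]
        refine Finset.sum_congr rfl fun k hk => ?_
        have hkM : k ≤ M := by
          have := Finset.mem_range.mp hk; omega
        rw [acoef_of_le hkM]
        have e1 : 1 + k - 1 = k := by omega
        have e2 : M + 1 - (1 + k) = M - k := by omega
        rw [e1, e2]
        push_cast
        ring_nf
      rw [hsum, ← sin_pow_odd θ M]
      have e3 : 2 * (M + 1) - 3 = 2 * M - 1 := by omega
      have e4 : 2 * (M + 1) - 1 = 2 * M + 1 := by omega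
      rw [e3, e4]
      have h4 : ((4:ℝ)) ^ M ≠ 0 := by positivity
      field_simp

/-- The Fourier symbol of the `2M`-th order staggered FD operator equals a
polynomial in `sin θ`:
`2 ∑_{p=1}^{M} (λ_{2p-1}^{2M}/(2p-1)) sin((2p-1)θ)
  = 2 ∑_{p=1}^{M} ([(2p-3)!!]²/(2p-1)!) sin^{2p-1} θ`. -/
theorem lamFD_symbol_identity (M : ℕ) (hM : 1 ≤ M) (θ : ℝ) :
    2 * ∑ p ∈ Finset.Icc 1 M,
        lamFD M p / (2 * p - 1 : ℝ) * Real.sin ((2 * p - 1 : ℝ) * θ) =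
      2 * ∑ p ∈ Finset.Icc 1 M,
        ((2 * p - 3)‼ : ℝ) ^ 2 / ((2 * p - 1)! : ℝ) * Real.sin θ ^ (2 * p - 1) := by
  rw [main_aux M hM θ]
end

section
/- As M → ∞, the partial sums ∑_{p=1}^{M} [(2p-3)!!]^2/(2p-1)! converge to π/2; equivalently, the maximal CFL number ν_max^{2M} = 1/∑_{p=1}^{M} [(2p-3)!!]^2/(2p-1)! is a decreasing sequence in M that converges to 2/π. -/
/-! Writing `p = n + 1`, the `p`-th term of `S_M` is `C(2n,n) 4⁻ⁿ / (2n+1) = ∫₀¹ C(2n,n) 4⁻ⁿ t²ⁿ dt`,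
and `∑ₙ C(2n,n) 4⁻ⁿ uⁿ = (1 - u)^(-1/2)` is the binomial series. Since all terms are nonnegative,
monotone convergence gives `S_M → ∫₀¹ (1 - t²)^(-1/2) dt = arcsin 1 = π/2`, and since they are
positive, `S_M` increases strictly, so `1 / S_M` decreases to `2 / π`. -/

open Nat Finset Real Filter

/-- The partial sum `S_M = ∑_{p=1}^{M} [(2p-3)!!]²/(2p-1)!`, whose reciprocal
is the maximal CFL number `ν_max^{2M}` of the `(2,2M)` leap-frog FDTD scheme. -/
noncomputable def SsumFD (M : ℕ) : ℝ :=
  ∑ p ∈ Finset.Icc 1 M, ((2 * p - 3)‼ : ℝ) ^ 2 / ((2 * p - 1)! : ℝ)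

open MeasureTheory Set Topology

theorem Nat.doubleFactorial_two_mul_sub_one_mul (n : ℕ) :
    (2 * n - 1)‼ * (2 ^ n * n !) = (2 * n)! := by
  cases n with
  | zero => rfl
  | succ m =>
    rw [← doubleFactorial_two_mul, show 2 * (m + 1) = 2 * m + 1 + 1 by ring,
      factorial_eq_mul_doubleFactorial, Nat.add_sub_cancel, mul_comm]

theorem sq_doubleFactorial_two_mul_sub_one_div_factorial (n : ℕ) :
    ((2 * n - 1)‼ : ℝ) ^ 2 / (2 * n + 1)! = centralBinom n / 4 ^ n / (2 * n + 1) := by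
  have hd : ((2 * n - 1)‼ : ℝ) * (2 ^ n * n !) = (2 * n)! := by
    exact_mod_cast doubleFactorial_two_mul_sub_one_mul n
  have hc : (centralBinom n : ℝ) * n ! * n ! = (2 * n)! := by
    have := choose_mul_factorial_mul_factorial (n := 2 * n) (k := n) (by omega)
    rw [show 2 * n - n = n by omega] at this
    exact_mod_cast this
  have h4 : (4 : ℝ) ^ n = 2 ^ n * 2 ^ n := by rw [← mul_pow]; norm_num
  rw [factorial_succ, cast_mul, div_div, div_eq_div_iff (by positivity) (by positivity)]
  -- after multiplying by `(n!)²`, both sides equal `(2n+1) ((2n)!)²`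
  refine mul_right_cancel₀ (pow_ne_zero 2 (by positivity : (n ! : ℝ) ≠ 0)) ?_
  push_cast
  linear_combination (2 * n + 1 : ℝ) * ((2 * n - 1)‼ * (2 ^ n * n !) + (2 * n)!) * hd
    - (2 * n + 1 : ℝ) * (2 * n)! * hc + ((2 * n - 1)‼ : ℝ) ^ 2 * (2 * n + 1) * n ! ^ 2 * h4

theorem Ring.choose_half_add_sub_one (n : ℕ) :
    Ring.choose ((1 / 2 : ℝ) + n - 1) n = centralBinom n / 4 ^ n := by
  induction n with
  | zero => simp
  | succ n ih =>
    have absorb := Ring.choose_smul_choose ((1 / 2 : ℝ) + (n + 1 : ℕ) - 1) (n := n + 1) (k := 1)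
      (by omega)
    simp only [Nat.choose_one_right, Ring.choose_one_right, Nat.add_sub_cancel,
      nsmul_eq_mul] at absorb
    push_cast at absorb ⊢
    rw [show (1 / 2 : ℝ) + (n + 1) - 1 - 1 = 1 / 2 + n - 1 by ring, ih] at absorb
    have hc : ((n : ℝ) + 1) * centralBinom (n + 1) = 2 * (2 * n + 1) * centralBinom n := by
      exact_mod_cast succ_mul_centralBinom_succ n
    rw [← mul_right_inj' (show ((n : ℝ) + 1) ≠ 0 by positivity), absorb]
    linear_combination (-(1 : ℝ) / 4 ^ (n + 1)) * hc

theorem hasSum_centralBinom_div_four_pow_mul_pow {x : ℝ} (hx : |x| < 1) :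
    HasSum (fun n ↦ (centralBinom n / 4 ^ n : ℝ) * x ^ n) (1 / √(1 - x)) := by
  have := (one_div_one_sub_rpow_hasFPowerSeriesOnBall_zero (1 / 2)).hasSum (y := x)
    (by simpa [edist_dist, Real.dist_eq] using hx)
  simpa only [FormalMultilinearSeries.ofScalars_apply_eq, zero_add, smul_eq_mul,
    Ring.choose_half_add_sub_one, ← Real.sqrt_eq_rpow] using this

theorem integrableOn_one_div_sqrt_one_sub_sq :
    IntegrableOn (fun t ↦ 1 / √(1 - t ^ 2)) (Ioc (-1) 1) :=
  intervalIntegral.integrableOn_deriv_of_nonneg continuous_arcsin.continuousOn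
    (fun t ht ↦ hasDerivAt_arcsin ht.1.ne' ht.2.ne) (fun _ _ ↦ by positivity)

theorem integral_one_div_sqrt_one_sub_sq {a b : ℝ} (ha : -1 ≤ a) (hab : a ≤ b) (hb : b ≤ 1) :
    ∫ t in a..b, 1 / √(1 - t ^ 2) = arcsin b - arcsin a := by
  refine intervalIntegral.integral_eq_sub_of_hasDerivAt_of_le hab continuous_arcsin.continuousOn
    (fun t ht ↦ hasDerivAt_arcsin (by linarith [ht.1]) (by linarith [ht.2])) ?_
  rw [intervalIntegrable_iff_integrableOn_Ioc_of_le hab]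
  exact integrableOn_one_div_sqrt_one_sub_sq.mono_set (Ioc_subset_Ioc ha hb)

theorem tendsto_integral_sum_centralBinom_div_four_pow_mul_pow :
    Tendsto (fun M ↦ ∫ t in 0..1, ∑ n ∈ range M, (centralBinom n / 4 ^ n : ℝ) * t ^ (2 * n))
      atTop (𝓝 (π / 2)) := by
  have hlim : ∫ t in 0..1, 1 / √(1 - t ^ 2) = π / 2 := by
    rw [integral_one_div_sqrt_one_sub_sq (by norm_num) zero_le_one le_rfl, arcsin_one,
      arcsin_zero, sub_zero]
  simp only [intervalIntegral.integral_of_le zero_le_one, integral_Ioc_eq_integral_Ioo] at hlim ⊢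
  rw [← hlim]
  refine integral_tendsto_of_tendsto_of_monotone (fun M ↦ ?_) ?_ ?_ ?_
  · exact (continuous_finsetSum _ fun n _ ↦ by fun_prop).integrableOn_Ioc.mono_set
      Ioo_subset_Ioc_self
  · exact integrableOn_one_div_sqrt_one_sub_sq.mono_set
      (Ioo_subset_Ioc_self.trans (Ioc_subset_Ioc_left (by norm_num)))
  · exact ae_of_all _ fun t ↦ (sum_mono_set_of_nonneg fun n ↦
      mul_nonneg (by positivity) ((even_two_mul n).pow_nonneg t)).comp range_mono
  · filter_upwards [ae_restrict_mem measurableSet_Ioo] with t ht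
    have ht2 : |t ^ 2| < 1 := by
      rw [abs_of_nonneg (by positivity)]
      nlinarith [ht.1, ht.2]
    simpa only [pow_mul] using (hasSum_centralBinom_div_four_pow_mul_pow ht2).tendsto_sum_nat

theorem SsumFD_eq_sum_range (M : ℕ) :
    SsumFD M = ∑ n ∈ range M, (centralBinom n / 4 ^ n : ℝ) / (2 * n + 1) := by
  rw [SsumFD, ← Finset.Ico_add_one_right_eq_Icc, sum_Ico_eq_sum_range, Nat.add_sub_cancel]
  refine sum_congr rfl fun n _ ↦ ?_
  rw [show 2 * (1 + n) - 3 = 2 * n - 1 by omega, show 2 * (1 + n) - 1 = 2 * n + 1 by omega]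
  exact sq_doubleFactorial_two_mul_sub_one_div_factorial n

theorem integral_sum_centralBinom_div_four_pow_mul_pow (M : ℕ) :
    ∫ t in 0..1, ∑ n ∈ range M, (centralBinom n / 4 ^ n : ℝ) * t ^ (2 * n) = SsumFD M := by
  rw [intervalIntegral.integral_finsetSum fun n _ ↦
    (by fun_prop : Continuous _).intervalIntegrable 0 1, SsumFD_eq_sum_range]
  refine sum_congr rfl fun n _ ↦ ?_
  rw [intervalIntegral.integral_const_mul, integral_pow]
  push_cast
  ring

theorem SsumFD_strictMono : StrictMono SsumFD :=
  strictMono_nat_of_lt_succ fun M ↦ by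
    rw [SsumFD_eq_sum_range, SsumFD_eq_sum_range, sum_range_succ]
    have hM := centralBinom_pos M
    exact lt_add_of_pos_right _ (by positivity)

/-- `S_M → π/2` as `M → ∞`; equivalently, the maximal CFL number
`ν_max^{2M} = 1/S_M` is decreasing in `M` (on `M ≥ 1`) and converges to `2/π`. -/
theorem SsumFD_tendsto_pi_div_two :
    Tendsto SsumFD atTop (nhds (Real.pi / 2)) ∧
    StrictAntiOn (fun M : ℕ => 1 / SsumFD M) (Set.Ici 1) ∧
    Tendsto (fun M : ℕ => 1 / SsumFD M) atTop (nhds (2 / Real.pi)) := by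
  have hlim : Tendsto SsumFD atTop (𝓝 (π / 2)) := by
    simpa only [integral_sum_centralBinom_div_four_pow_mul_pow] using
      tendsto_integral_sum_centralBinom_div_four_pow_mul_pow
  refine ⟨hlim, fun a ha b _ hab ↦ ?_, ?_⟩
  · have hpos : 0 < SsumFD a := by
      simpa [SsumFD] using SsumFD_strictMono (lt_of_lt_of_le zero_lt_one ha)
    exact one_div_lt_one_div_of_lt hpos (SsumFD_strictMono hab)
  · simpa only [one_div, inv_div] using hlim.inv₀ (by positivity)
end

section
/- For every M ≥ 1, the partial sum S_M := ∑_{p=1}^{M} [(2p-3)!!]^2/(2p-1)! satisfies 1 ≤ S_M < π/2, so that the maximal CFL number ν_max^{2M} = 1/S_M satisfies 2/π < ν_max^{2M} ≤ 1. -/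
/-!
Write `a n = (2n-1)‼ / (2n)‼` for the Taylor coefficients of `(1 - t)^(-1/2)`, `P_M` for its
Taylor polynomial `∑_{n<M} a n tⁿ`, and `A_M x = ∑_{n<M} a n x^(2n+1) / (2n+1)` for the Taylor
polynomial of `arcsin`, so that `S_M = A_M 1` and `A_M' x = P_M (x²)`.
The recurrence `(2n+2) a (n+1) = (2n+1) a n` gives `2 (1 - t) P_M' = P_M - (2M-1) a (M-1) t^(M-1)`,
so `(1 - t) P_M(t)²` is strictly decreasing on `[0, 1]` and stays below its value `1` at `0`.
Hence `P_M (x²) < 1 / √(1 - x²) = arcsin' x` on `(0, 1)`, and `S_M = A_M 1 < arcsin 1 = π / 2`.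
The lower bound `1` is the first term of the sum.
-/

open Nat Finset Real

/-- `(2n-1)‼ / (2n)‼`, the `n`-th Taylor coefficient of `(1 - t)^(-1/2)` at `0`. -/
noncomputable def invSqrtCoeff (n : ℕ) : ℝ := ((2 * n - 1)‼ : ℝ) / ((2 * n)‼ : ℝ)

noncomputable def invSqrtTaylor (M : ℕ) (t : ℝ) : ℝ :=
  ∑ n ∈ range M, invSqrtCoeff n * t ^ n

noncomputable def arcsinTaylor (M : ℕ) (x : ℝ) : ℝ :=
  ∑ n ∈ range M, invSqrtCoeff n * x ^ (2 * n + 1) / (2 * n + 1)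

lemma invSqrtCoeff_zero : invSqrtCoeff 0 = 1 := by simp [invSqrtCoeff]

lemma invSqrtCoeff_pos (n : ℕ) : 0 < invSqrtCoeff n := by
  unfold invSqrtCoeff
  have := Nat.doubleFactorial_pos (2 * n - 1)
  have := Nat.doubleFactorial_pos (2 * n)
  positivity

lemma two_mul_add_two_mul_invSqrtCoeff_succ (n : ℕ) :
    (2 * n + 2) * invSqrtCoeff (n + 1) = (2 * n + 1) * invSqrtCoeff n := by
  have hodd : (2 * (n + 1) - 1)‼ = (2 * n + 1) * (2 * n - 1)‼ := by
    rw [show 2 * (n + 1) - 1 = 2 * n + 1 by omega, Nat.doubleFactorial_add_one]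
  have heven : (2 * (n + 1))‼ = (2 * n + 2) * (2 * n)‼ := Nat.doubleFactorial_add_two _
  have := Nat.doubleFactorial_pos (2 * n)
  simp only [invSqrtCoeff, hodd, heven]
  push_cast
  field_simp

lemma hasDerivAt_invSqrtTaylor (M : ℕ) (t : ℝ) :
    HasDerivAt (invSqrtTaylor M) (∑ n ∈ range M, invSqrtCoeff n * (n * t ^ (n - 1))) t :=
  HasDerivAt.fun_sum fun n _ => (hasDerivAt_pow n t).const_mul _

lemma two_mul_one_sub_mul_deriv_invSqrtTaylor (m : ℕ) (t : ℝ) :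
    2 * (1 - t) * ∑ n ∈ range (m + 1), invSqrtCoeff n * (n * t ^ (n - 1)) =
      invSqrtTaylor (m + 1) t - (2 * m + 1) * invSqrtCoeff m * t ^ m := by
  induction m with
  | zero => simp [invSqrtTaylor, invSqrtCoeff_zero]
  | succ k ih =>
    have hderiv : ∑ n ∈ range (k + 2), invSqrtCoeff n * (n * t ^ (n - 1)) =
        ∑ n ∈ range (k + 1), invSqrtCoeff n * (n * t ^ (n - 1)) +
          invSqrtCoeff (k + 1) * ((k + 1) * t ^ k) := by
      rw [sum_range_succ]; push_cast; rfl
    have hpoly : invSqrtTaylor (k + 2) t =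
        invSqrtTaylor (k + 1) t + invSqrtCoeff (k + 1) * t ^ (k + 1) := sum_range_succ _ _
    rw [hderiv, hpoly]
    push_cast
    linear_combination ih + t ^ k * two_mul_add_two_mul_invSqrtCoeff_succ k

lemma one_le_invSqrtTaylor (m : ℕ) {t : ℝ} (ht : 0 ≤ t) : 1 ≤ invSqrtTaylor (m + 1) t := by
  rw [invSqrtTaylor, sum_range_succ', pow_zero, invSqrtCoeff_zero, mul_one, le_add_iff_nonneg_left]
  exact sum_nonneg fun n _ => mul_nonneg (invSqrtCoeff_pos _).le (pow_nonneg ht _)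

@[fun_prop]
lemma continuous_invSqrtTaylor (M : ℕ) : Continuous (invSqrtTaylor M) :=
  continuous_finsetSum _ fun _ _ => by fun_prop

lemma strictAntiOn_one_sub_mul_invSqrtTaylor_sq (m : ℕ) :
    StrictAntiOn (fun t => (1 - t) * invSqrtTaylor (m + 1) t ^ 2) (Set.Icc 0 1) := by
  apply strictAntiOn_of_deriv_neg (convex_Icc 0 1) (by fun_prop)
  · intro t ht
    rw [interior_Icc] at ht
    set P := invSqrtTaylor (m + 1) t
    have hderiv := ((hasDerivAt_id' t).const_sub 1).fun_mul
      ((hasDerivAt_invSqrtTaylor (m + 1) t).fun_pow 2)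
    have hP : 1 ≤ P := one_le_invSqrtTaylor m ht.1.le
    have hpos : 0 < (2 * m + 1) * invSqrtCoeff m * t ^ m * P := by
      have := invSqrtCoeff_pos m
      have := ht.1
      positivity
    rw [hderiv.deriv]
    push_cast
    linear_combination P * two_mul_one_sub_mul_deriv_invSqrtTaylor m t + hpos

lemma invSqrtTaylor_nonneg (M : ℕ) {t : ℝ} (ht : 0 ≤ t) : 0 ≤ invSqrtTaylor M t :=
  sum_nonneg fun n _ => mul_nonneg (invSqrtCoeff_pos n).le (pow_nonneg ht n)

lemma one_sub_mul_invSqrtTaylor_sq_lt_one (M : ℕ) {t : ℝ} (ht₀ : 0 < t) (ht₁ : t ≤ 1) :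
    (1 - t) * invSqrtTaylor M t ^ 2 < 1 := by
  cases M with
  | zero => simp [invSqrtTaylor]
  | succ m =>
    have hzero : invSqrtTaylor (m + 1) 0 = 1 := by
      simp [invSqrtTaylor, sum_range_succ', invSqrtCoeff_zero]
    simpa [hzero] using
      strictAntiOn_one_sub_mul_invSqrtTaylor_sq m ⟨le_rfl, zero_le_one⟩ ⟨ht₀.le, ht₁⟩ ht₀

lemma invSqrtTaylor_sq_lt_one_div_sqrt (M : ℕ) {x : ℝ} (hx₀ : 0 < x) (hx₁ : x < 1) :
    invSqrtTaylor M (x ^ 2) < 1 / √(1 - x ^ 2) := by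
  have hs : 0 < 1 - x ^ 2 := by nlinarith
  have hP := invSqrtTaylor_nonneg M (sq_nonneg x)
  rw [lt_div_iff₀ (sqrt_pos.2 hs)]
  refine (pow_lt_one_iff_of_nonneg (by positivity) two_ne_zero).1 ?_
  rw [mul_pow, sq_sqrt hs.le, mul_comm]
  exact one_sub_mul_invSqrtTaylor_sq_lt_one M (by positivity) (by nlinarith)

lemma hasDerivAt_arcsinTaylor (M : ℕ) (x : ℝ) :
    HasDerivAt (arcsinTaylor M) (invSqrtTaylor M (x ^ 2)) x := by
  have hterm (n : ℕ) : HasDerivAt (fun x : ℝ => invSqrtCoeff n * x ^ (2 * n + 1) / (2 * n + 1))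
      (invSqrtCoeff n * (x ^ 2) ^ n) x := by
    refine (((hasDerivAt_pow (2 * n + 1) x).const_mul _).div_const _).congr_deriv ?_
    rw [add_tsub_cancel_right, pow_mul]
    push_cast
    field_simp
  exact HasDerivAt.fun_sum fun n _ => hterm n

lemma arcsinTaylor_lt_arcsin (M : ℕ) {x : ℝ} (hx₀ : 0 < x) (hx₁ : x ≤ 1) :
    arcsinTaylor M x < arcsin x := by
  have hmono : StrictMonoOn (fun x => arcsin x - arcsinTaylor M x) (Set.Icc 0 1) := by
    apply strictMonoOn_of_deriv_pos (convex_Icc 0 1)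
    · have := Differentiable.continuous fun x => (hasDerivAt_arcsinTaylor M x).differentiableAt
      exact (continuous_arcsin.sub this).continuousOn
    · intro y hy
      rw [interior_Icc] at hy
      rw [((hasDerivAt_arcsin (by linarith [hy.1]) hy.2.ne).fun_sub
        (hasDerivAt_arcsinTaylor M y)).deriv, sub_pos]
      exact invSqrtTaylor_sq_lt_one_div_sqrt M hy.1 hy.2
  simpa [arcsinTaylor] using hmono ⟨le_rfl, zero_le_one⟩ ⟨hx₀.le, hx₁⟩ hx₀

lemma sq_doubleFactorial_div_factorial (n : ℕ) :
    ((2 * n - 1)‼ : ℝ) ^ 2 / ((2 * n + 1)! : ℝ) = invSqrtCoeff n / (2 * n + 1) := by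
  have hfac : (2 * n + 1)! = (2 * n + 1) * (2 * n - 1)‼ * (2 * n)‼ := by
    rw [Nat.factorial_eq_mul_doubleFactorial, Nat.doubleFactorial_add_one]
  have := Nat.doubleFactorial_pos (2 * n - 1)
  have := Nat.doubleFactorial_pos (2 * n)
  rw [hfac, invSqrtCoeff]
  push_cast
  field_simp

lemma SsumFD_eq_arcsinTaylor_one (M : ℕ) : SsumFD M = arcsinTaylor M 1 := by
  rw [SsumFD, ← Ico_add_one_right_eq_Icc, sum_Ico_eq_sum_range, Nat.add_sub_cancel]
  refine sum_congr rfl fun n _ => ?_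
  rw [show 2 * (1 + n) - 3 = 2 * n - 1 by omega, show 2 * (1 + n) - 1 = 2 * n + 1 by omega,
    sq_doubleFactorial_div_factorial, one_pow, mul_one]

lemma one_le_SsumFD {M : ℕ} (hM : 1 ≤ M) : 1 ≤ SsumFD M := by
  have := single_le_sum (f := fun p : ℕ => ((2 * p - 3)‼ : ℝ) ^ 2 / ((2 * p - 1)! : ℝ))
    (fun p _ => by positivity) (mem_Icc.2 ⟨le_rfl, hM⟩)
  simpa [SsumFD] using this

lemma SsumFD_lt_pi_div_two (M : ℕ) : SsumFD M < π / 2 := by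
  simpa [SsumFD_eq_arcsinTaylor_one] using arcsinTaylor_lt_arcsin M one_pos le_rfl

/-- For every `M ≥ 1`, `1 ≤ S_M < π/2`, so `2/π < ν_max^{2M} = 1/S_M ≤ 1`. -/
theorem SsumFD_bounds (M : ℕ) (hM : 1 ≤ M) :
    1 ≤ SsumFD M ∧ SsumFD M < Real.pi / 2 ∧
    2 / Real.pi < 1 / SsumFD M ∧ 1 / SsumFD M ≤ 1 := by
  have hlower := one_le_SsumFD hM
  have hupper := SsumFD_lt_pi_div_two M
  have hpos : 0 < SsumFD M := one_pos.trans_le hlower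
  refine ⟨hlower, hupper, ?_, (div_le_one hpos).2 hlower⟩
  simpa [one_div_div] using one_div_lt_one_div_of_lt hpos hupper
end

section
/- Let ε_∞ > 0, ε_d > 0, ε_s = ε_∞ + ε_d, and define ε(ω̂) = ε_∞(1 − (ε_d/ε_∞)/(ω̂² − 1)) and δ(ω̂) = ε_d ω̂² / (ω̂² − 1)². Then for every ω̂ with 1 < ω̂ < √(ε_s/ε_∞), the inequality δ(ω̂)/ε(ω̂) < −1 holds. -/
open Real

/-- In the lossless Lorentz model, with permittivity
`ε(ω̂) = ε_∞(1 − (ε_d/ε_∞)/(ω̂² − 1))` and `δ(ω̂) = ε_d ω̂²/(ω̂² − 1)²`,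
for every `ω̂` in the interior of the medium absorption band
`(1, √(ε_s/ε_∞))` one has `δ(ω̂)/ε(ω̂) < −1`. -/
theorem lorentz_delta_div_eps_lt_neg_one
    (εinf εd : ℝ) (hεinf : 0 < εinf) (hεd : 0 < εd)
    (εs : ℝ) (hεs : εs = εinf + εd)
    (ω : ℝ) (hω1 : 1 < ω) (hω2 : ω < Real.sqrt (εs / εinf)) :
    (εd * ω ^ 2 / (ω ^ 2 - 1) ^ 2) /
        (εinf * (1 - (εd / εinf) / (ω ^ 2 - 1))) < -1 := by
  have hx : 0 < ω ^ 2 - 1 := by nlinarith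
  have hω0 : 0 < ω := by linarith
  have hsq : ω ^ 2 < εs / εinf := by
    have := Real.sq_sqrt (le_of_lt (div_pos (by nlinarith : 0 < εs) hεinf))
    nlinarith [Real.sqrt_nonneg (εs / εinf)]
  have hup : εinf * (ω ^ 2 - 1) < εd := by
    have h := (lt_div_iff₀ hεinf).mp hsq
    nlinarith
  have hε : εinf * (1 - (εd / εinf) / (ω ^ 2 - 1)) < 0 := by
    have : εinf * (1 - (εd / εinf) / (ω ^ 2 - 1)) =
        (εinf * (ω ^ 2 - 1) - εd) / (ω ^ 2 - 1) := by
      field_simp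
    rw [this]
    exact div_neg_of_neg_of_pos (by linarith) hx
  rw [div_lt_iff_of_neg hε]
  rw [lt_div_iff₀ (by positivity : (0:ℝ) < (ω ^ 2 - 1) ^ 2)]
  have hexp : -1 * (εinf * (1 - εd / εinf / (ω ^ 2 - 1))) * (ω ^ 2 - 1) ^ 2 =
      (εd - εinf * (ω ^ 2 - 1)) * (ω ^ 2 - 1) := by
    field_simp; ring
  rw [hexp]
  nlinarith
end

section
/- With ε and δ as in the lossless Lorentz model (γ̂ = 0), for every ω̂ in the interior of the medium absorption band (1, √(ε_s/ε_∞)) one has |δ(ω̂)/ε(ω̂) − 1/2| ≥ |δ(ω̂)/ε(ω̂) + 1|, i.e., the leading dispersion-error coefficient of the leap-frog scheme dominates that of the trapezoidal scheme in the absorption band. -/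
open Real

/-- In the interior of the absorption band of the lossless Lorentz model,
the leading dispersion-error coefficient of the leap-frog scheme dominates
that of the trapezoidal scheme: `|δ/ε − 1/2| ≥ |δ/ε + 1|`. -/
theorem lorentz_leapfrog_coeff_dominates
    (εinf εd : ℝ) (hεinf : 0 < εinf) (hεd : 0 < εd)
    (εs : ℝ) (hεs : εs = εinf + εd)
    (ω : ℝ) (hω1 : 1 < ω) (hω2 : ω < Real.sqrt (εs / εinf)) :
    |(εd * ω ^ 2 / (ω ^ 2 - 1) ^ 2) /
        (εinf * (1 - (εd / εinf) / (ω ^ 2 - 1))) - 1 / 2| ≥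
      |(εd * ω ^ 2 / (ω ^ 2 - 1) ^ 2) /
        (εinf * (1 - (εd / εinf) / (ω ^ 2 - 1))) + 1| := by
  have hω0 : (0:ℝ) < ω := lt_trans one_pos hω1
  have ht : 0 < ω ^ 2 - 1 := by nlinarith
  have hsq : ω ^ 2 < εs / εinf := (Real.lt_sqrt hω0.le).mp hω2
  have hsq' : ω ^ 2 * εinf < εs := (lt_div_iff₀ hεinf).mp hsq
  have hband : εinf * (ω ^ 2 - 1) < εd := by nlinarith
  set N : ℝ := εd * ω ^ 2 / (ω ^ 2 - 1) ^ 2 with hN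
  set E : ℝ := εinf * (1 - (εd / εinf) / (ω ^ 2 - 1)) with hEdef
  have hE : E = (εinf * (ω ^ 2 - 1) - εd) / (ω ^ 2 - 1) := by
    rw [hEdef]
    field_simp
  have hEneg : E < 0 := by
    rw [hE]
    exact div_neg_of_neg_of_pos (by linarith) ht
  have hden : εinf * (ω ^ 2 - 1) - εd < 0 := by linarith
  have hx : N / E ≤ -1 / 4 := by
    have hrw : N / E = εd * ω ^ 2 / ((ω ^ 2 - 1) * (εinf * (ω ^ 2 - 1) - εd)) := by
      rw [div_eq_div_iff hEneg.ne (mul_ne_zero ht.ne' hden.ne), hN, hE]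
      field_simp
    rw [hrw, div_le_iff_of_neg (mul_neg_of_pos_of_neg ht hden)]
    nlinarith [mul_pos hεd ht, mul_pos hεinf (mul_pos ht ht)]
  set x : ℝ := N / E
  have h1 : |x - 1 / 2| = -(x - 1 / 2) := abs_of_nonpos (by linarith)
  rw [ge_iff_le, h1, abs_le]
  constructor <;> linarith
end

section
/- Let ε_∞ > 0, ε_d > 0 and 0 < ν ≤ 1/√2. Then the quadratic-in-ω̂² inequality (ε_d/ε_∞)² + (1 − 2ν²)(ω̂² − 1)² − 2(ε_d/ε_∞)(ω̂² − 1 + ν²(1 − 3ω̂²)) ≥ 0 holds for all ω̂ ≥ 0. -/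
/-- For `0 < ν ≤ 1/√2`, the quadratic-in-`ω̂²` inequality
`(ε_d/ε_∞)² + (1 − 2ν²)(ω̂² − 1)² − 2(ε_d/ε_∞)(ω̂² − 1 + ν²(1 − 3ω̂²)) ≥ 0`
holds for all `ω̂ ≥ 0`. -/
theorem lorentz_leapfrog_high_order_better
    (εinf εd ν : ℝ) (hεinf : 0 < εinf) (hεd : 0 < εd)
    (hν0 : 0 < ν) (hν1 : ν ≤ 1 / Real.sqrt 2)
    (ω : ℝ) (hω : 0 ≤ ω) :
    (εd / εinf) ^ 2 + (1 - 2 * ν ^ 2) * (ω ^ 2 - 1) ^ 2 -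
        2 * (εd / εinf) * (ω ^ 2 - 1 + ν ^ 2 * (1 - 3 * ω ^ 2)) ≥ 0 := by
  have hr : 0 < εd / εinf := div_pos hεd hεinf
  have hν2 : ν ^ 2 ≤ 1 / 2 := by
    have h2 : (0:ℝ) < Real.sqrt 2 := by positivity
    have := pow_le_pow_left₀ hν0.le hν1 2
    calc ν ^ 2 ≤ (1 / Real.sqrt 2) ^ 2 := this
      _ = 1 / 2 := by
        rw [div_pow, one_pow, Real.sq_sqrt (by norm_num : (2:ℝ) ≥ 0)]
  set r := εd / εinf with hrdef
  nlinarith [sq_nonneg (r + 1 - ω ^ 2), mul_nonneg hr.le (sq_nonneg ω),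
    mul_nonneg (mul_nonneg (sq_nonneg ν) hr.le) (sq_nonneg ω),
    mul_nonneg (by nlinarith : (0:ℝ) ≤ 1 - 2 * ν ^ 2) (sq_nonneg (r + 1 - ω ^ 2)),
    mul_pos hr hr, sq_nonneg ν, mul_nonneg (sq_nonneg ν) hr.le]
end

section
/- Let ε_∞ > 0, ε_d > 0, ε_s = ε_∞ + ε_d, γ̂ = 0, and ν > 0. Define ε(ω̂) = ε_∞(1 − (ε_d/ε_∞)/(ω̂² − 1)) and δ(ω̂) = ε_d ω̂²/(ω̂² − 1)². Then for every ω̂ ≥ 0 with ω̂ ∉ {1, √(ε_s/ε_∞)}, |δ(ω̂)/ε(ω̂) + 1 + ε(ω̂)/(2ε_∞ν²)| ≥ |δ(ω̂)/ε(ω̂) + 1|. -/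
/-!
The added term `ε / (2ε_∞ν²)` has the same sign as `δ/ε + 1`, because their product is
`(δ + ε) / (2ε_∞ν²)` and `δ + ε = ε_∞ + ε_d / (ω̂² - 1)²` is positive. Adding a number of the
same sign never decreases the absolute value.
-/

section AbsAdd

variable {𝕜 : Type*} [Field 𝕜] [LinearOrder 𝕜] [IsStrictOrderedRing 𝕜]

theorem abs_le_abs_add_of_mul_nonneg {a c : 𝕜} (h : 0 ≤ a * c) : |a| ≤ |a + c| :=
  sq_le_sq.mp (by nlinarith [sq_nonneg c])

theorem abs_div_add_one_le_abs_div_add_one_add_div {x y k : 𝕜} (hk : 0 ≤ k)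
    (hxy : 0 ≤ x + y) : |x / y + 1| ≤ |x / y + 1 + y / k| := by
  apply abs_le_abs_add_of_mul_nonneg
  rcases eq_or_ne y 0 with rfl | hy
  · simp
  · have hmul : (x / y + 1) * (y / k) = (x + y) / k := by
      field_simp
    rw [hmul]
    exact div_nonneg hxy hk

end AbsAdd

/-- The relative permittivity `ε(ω̂)` of the lossless Lorentz model. -/
noncomputable def lorentzPermittivity (εinf εd ω : ℝ) : ℝ :=
  εinf * (1 - (εd / εinf) / (ω ^ 2 - 1))

/-- The term `δ(ω̂)` of the leading dispersion-error coefficients. -/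
noncomputable def lorentzDelta (εd ω : ℝ) : ℝ :=
  εd * ω ^ 2 / (ω ^ 2 - 1) ^ 2

/-- This holds also at the resonance `ω̂ = 1`, where both sides reduce to `εinf` since `x / 0 = 0`. -/
theorem lorentzDelta_add_lorentzPermittivity {εinf : ℝ} (hεinf : εinf ≠ 0) (εd ω : ℝ) :
    lorentzDelta εd ω + lorentzPermittivity εinf εd ω = εinf + εd / (ω ^ 2 - 1) ^ 2 := by
  unfold lorentzDelta lorentzPermittivity
  rcases eq_or_ne (ω ^ 2 - 1) 0 with hD | hD
  · simp [hD]
  · field_simp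
    ring

theorem lorentz_trapezoidal_high_order_better_general
    (εinf εd ν : ℝ) (hεinf : 0 < εinf) (hεd : 0 < εd)
    (ω : ℝ) :
    |(εd * ω ^ 2 / (ω ^ 2 - 1) ^ 2) /
          (εinf * (1 - (εd / εinf) / (ω ^ 2 - 1))) + 1 +
        (εinf * (1 - (εd / εinf) / (ω ^ 2 - 1))) / (2 * εinf * ν ^ 2)| ≥
      |(εd * ω ^ 2 / (ω ^ 2 - 1) ^ 2) /
          (εinf * (1 - (εd / εinf) / (ω ^ 2 - 1))) + 1| := by
  have hsum : 0 ≤ lorentzDelta εd ω + lorentzPermittivity εinf εd ω := by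
    rw [lorentzDelta_add_lorentzPermittivity hεinf.ne']
    positivity
  exact abs_div_add_one_le_abs_div_add_one_add_div (by positivity) hsum

/-- For the lossless Lorentz model, the leading dispersion-error coefficient of
the `(2,2)` trapezoidal FDTD scheme dominates that of the high order `(2,2M)`
(`M ≥ 2`) schemes: `|δ/ε + 1 + ε/(2ε_∞ν²)| ≥ |δ/ε + 1|` for all admissible `ω̂`. -/
theorem lorentz_trapezoidal_high_order_better
    (εinf εd ν : ℝ) (hεinf : 0 < εinf) (hεd : 0 < εd) (hν : 0 < ν)
    (εs : ℝ) (hεs : εs = εinf + εd)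
    (ω : ℝ) (hω0 : 0 ≤ ω) (hω1 : ω ≠ 1) (hω2 : ω ≠ Real.sqrt (εs / εinf)) :
    |(εd * ω ^ 2 / (ω ^ 2 - 1) ^ 2) /
          (εinf * (1 - (εd / εinf) / (ω ^ 2 - 1))) + 1 +
        (εinf * (1 - (εd / εinf) / (ω ^ 2 - 1))) / (2 * εinf * ν ^ 2)| ≥
      |(εd * ω ^ 2 / (ω ^ 2 - 1) ^ 2) /
          (εinf * (1 - (εd / εinf) / (ω ^ 2 - 1))) + 1| :=
  lorentz_trapezoidal_high_order_better_general εinf εd ν hεinf hεd ω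
end

section
/- Consider the fourth order semi-discrete dispersion relation (1/6) s³ + s = K/2 where s = sin(k h/2). As a cubic in s it has exactly one real root for real K, and the corresponding physical wavenumber admits the expansion k_FD4 = k_ex (1 + (3/640)K⁴ − (1/3584)K⁶ + O(K⁸)) as K → 0, where K = k_ex h. -/
/-!
With `s = sin(kh/2)` the dispersion relation reads `K = s³/3 + 2s`, while `kh = 2 arcsin s`.
Substituting `K(s)` into the claimed series turns the claim into `2 arcsin s - P(s) = O(s⁹)`
for a polynomial `P`, which suffices because `|s| ≤ |K|/2`. Both sides vanish at `0`, so it is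
enough that their derivatives agree up to `O(s⁸)`: `P'` differs from twice the degree-6 Taylor
polynomial of `(1 - s²)^(-1/2)` by a multiple of `s⁸`, and that Taylor polynomial is within
`O(s⁸)` of `1 / √(1 - s²)`.
-/

open Real Filter Asymptotics Topology

theorem isBigO_pow_succ_of_deriv {F : Type*} [NormedAddCommGroup F] [NormedSpace ℝ F]
    {f : ℝ → F} {n : ℕ} (hdf : ∀ᶠ x in 𝓝 0, DifferentiableAt ℝ f x)
    (hderiv : deriv f =O[𝓝 0] (· ^ n)) (hf₀ : f 0 = 0) :
    f =O[𝓝 0] (· ^ (n + 1)) := by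
  have hfderiv : fderiv ℝ f =O[𝓝 0] fun x => ‖x - 0‖ ^ (n : ℝ) := by
    refine isBigO_norm_left.mp ?_
    simp only [← norm_deriv_eq_norm_fderiv, sub_zero, rpow_natCast, ← norm_pow]
    exact hderiv.norm_left.norm_right
  have := isBigO_norm_rpow_add_one_of_fderiv_of_apply_eq_zero n.cast_nonneg hdf hfderiv hf₀
  simp only [sub_zero, ← Nat.cast_add_one, rpow_natCast, ← norm_pow] at this
  exact isBigO_norm_right.mp this

theorem isBigO_pow_mul_of_continuousAt {𝕜 : Type*} [NormedField 𝕜] {g : 𝕜 → 𝕜}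
    (hg : ContinuousAt g 0) (n : ℕ) : (fun t => t ^ n * g t) =O[𝓝 0] (· ^ n) := by
  simpa using (isBigO_refl (· ^ n) (𝓝 (0 : 𝕜))).mul (hg.isBigO_one 𝕜)

theorem bijective_cube_div_six_add_self : Function.Bijective fun s : ℝ => s ^ 3 / 6 + s := by
  have hmono : StrictMono fun s : ℝ => s ^ 3 / 6 + s :=
    ((Odd.strictMono_pow (by decide : Odd 3)).div_const (by norm_num)).add strictMono_id
  refine ⟨hmono.injective, Continuous.surjective (by fun_prop) ?_ ?_⟩
  · refine tendsto_atTop_mono' _ ?_ tendsto_id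
    filter_upwards [eventually_ge_atTop 0] with s hs
    have : 0 ≤ s ^ 3 := by positivity
    simp only [id]; linarith
  · refine tendsto_atBot_mono' _ ?_ tendsto_id
    filter_upwards [eventually_le_atBot 0] with s hs
    have : s ^ 3 ≤ 0 := Odd.pow_nonpos (by decide) hs
    simp only [id]; linarith

theorem abs_le_half_abs_of_cube_div_six_add_self_eq {s K : ℝ} (h : s ^ 3 / 6 + s = K / 2) :
    |s| ≤ |K| / 2 := by
  have hK : |K / 2| = |s| * (s ^ 2 / 6 + 1) := by
    rw [← h, show s ^ 3 / 6 + s = s * (s ^ 2 / 6 + 1) by ring, abs_mul,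
      abs_of_pos (by positivity : (0:ℝ) < s ^ 2 / 6 + 1)]
  rw [abs_div, abs_two] at hK
  rw [hK]
  nlinarith [abs_nonneg s, sq_nonneg s]

/-- The Taylor polynomial of degree 6 of `(1 - t²)^(-1/2)` at `0`. -/
noncomputable def invSqrtOneSubSqTaylor (t : ℝ) : ℝ :=
  1 + t ^ 2 / 2 + 3 / 8 * t ^ 4 + 5 / 16 * t ^ 6

theorem isBigO_one_div_sqrt_one_sub_sq_sub_taylor :
    (fun t => 1 / √(1 - t ^ 2) - invSqrtOneSubSqTaylor t) =O[𝓝 0] (· ^ 8) := by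
  set Q : ℝ → ℝ := fun t => 35 / 64 + 7 / 32 * t ^ 2 + 35 / 256 * t ^ 4 + 25 / 256 * t ^ 6
  set g : ℝ → ℝ := fun t =>
    Q t / (√(1 - t ^ 2) * (1 + √(1 - t ^ 2) * invSqrtOneSubSqTaylor t))
  have hg : ContinuousAt g 0 := by
    refine ContinuousAt.div (by fun_prop) (by unfold invSqrtOneSubSqTaylor; fun_prop) ?_
    norm_num [invSqrtOneSubSqTaylor]
  refine (isBigO_pow_mul_of_continuousAt hg 8).congr' ?_ .rfl
  filter_upwards [Ioo_mem_nhds (show (-1 : ℝ) < 0 by norm_num) one_pos] with t ht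
  have hr : 0 < √(1 - t ^ 2) := sqrt_pos.mpr (by nlinarith [ht.1, ht.2])
  have hr2 : √(1 - t ^ 2) ^ 2 = 1 - t ^ 2 := sq_sqrt (by nlinarith [ht.1, ht.2])
  have hA : 0 < 1 + √(1 - t ^ 2) * invSqrtOneSubSqTaylor t := by
    unfold invSqrtOneSubSqTaylor; positivity
  -- rationalise: `1/r - A = (1 - (r A)²) / (r (1 + r A))`, and `1 - (r A)² = t⁸ Q t`
  have hQ : t ^ 8 * Q t = 1 - (√(1 - t ^ 2) * invSqrtOneSubSqTaylor t) ^ 2 := by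
    rw [mul_pow, hr2]; unfold invSqrtOneSubSqTaylor; ring
  simp only [g]
  rw [← mul_div_assoc, hQ]
  field_simp
  ring

/-- `K = k_ex h` in terms of `s = sin(k h / 2)`, by the dispersion relation `s³/6 + s = K/2`. -/
noncomputable def fd4Wavenumber (s : ℝ) : ℝ := s ^ 3 / 3 + 2 * s

noncomputable def fd4Series (K : ℝ) : ℝ := K * (1 + 3 / 640 * K ^ 4 - 1 / 3584 * K ^ 6)

theorem hasDerivAt_fd4Wavenumber (s : ℝ) : HasDerivAt fd4Wavenumber (s ^ 2 + 2) s :=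
  (((hasDerivAt_pow 3 s).div_const 3).add ((hasDerivAt_id s).const_mul 2)).congr_deriv
    (by norm_num)

theorem hasDerivAt_fd4Series (K : ℝ) :
    HasDerivAt fd4Series (1 + 3 / 128 * K ^ 4 - 1 / 512 * K ^ 6) K :=
  ((hasDerivAt_id K).mul (((hasDerivAt_pow 4 K).const_mul (3 / 640)).const_add 1 |>.sub
    ((hasDerivAt_pow 6 K).const_mul (1 / 3584)))).congr_deriv (by norm_num; ring)

theorem hasDerivAt_two_mul_arcsin_sub_fd4Series {t : ℝ} (ht : t ∈ Set.Ioo (-1) 1) :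
    HasDerivAt (fun t => 2 * arcsin t - fd4Series (fd4Wavenumber t))
      (2 * (1 / √(1 - t ^ 2))
        - (1 + 3 / 128 * fd4Wavenumber t ^ 4 - 1 / 512 * fd4Wavenumber t ^ 6) * (t ^ 2 + 2)) t :=
  ((hasDerivAt_arcsin ht.1.ne' ht.2.ne).const_mul 2).sub
    ((hasDerivAt_fd4Series _).comp t (hasDerivAt_fd4Wavenumber t))

theorem isBigO_deriv_two_mul_arcsin_sub_fd4Series :
    deriv (fun t => 2 * arcsin t - fd4Series (fd4Wavenumber t)) =O[𝓝 0] (· ^ 8) := by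
  have hpoly : (fun t => 2 * invSqrtOneSubSqTaylor t
      - (1 + 3 / 128 * fd4Wavenumber t ^ 4 - 1 / 512 * fd4Wavenumber t ^ 6) * (t ^ 2 + 2))
        =O[𝓝 0] (· ^ 8) := by
    refine (isBigO_pow_mul_of_continuousAt (g := fun t => 11 / 72 * t ^ 2 + 13 / 192 * t ^ 4
      + 49 / 3456 * t ^ 6 + 17 / 10368 * t ^ 8 + 19 / 186624 * t ^ 10 + 1 / 373248 * t ^ 12)
      (by fun_prop) 8).congr_left fun t => ?_
    unfold invSqrtOneSubSqTaylor fd4Wavenumber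
    ring
  refine ((isBigO_one_div_sqrt_one_sub_sq_sub_taylor.const_mul_left 2).add hpoly).congr' ?_ .rfl
  filter_upwards [Ioo_mem_nhds (show (-1 : ℝ) < 0 by norm_num) one_pos] with t ht
  rw [(hasDerivAt_two_mul_arcsin_sub_fd4Series ht).deriv]
  ring

theorem isBigO_two_mul_arcsin_sub_fd4Series :
    (fun t => 2 * arcsin t - fd4Series (fd4Wavenumber t)) =O[𝓝 0] (· ^ 9) := by
  refine isBigO_pow_succ_of_deriv ?_ isBigO_deriv_two_mul_arcsin_sub_fd4Series
    (by simp [fd4Series, fd4Wavenumber])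
  filter_upwards [Ioo_mem_nhds (show (-1 : ℝ) < 0 by norm_num) one_pos] with t ht
  exact (hasDerivAt_two_mul_arcsin_sub_fd4Series ht).differentiableAt

/-- The FD4 dispersion relation `s³/6 + s = K/2` (with `s = sin(k h/2)`) has
exactly one real root `s` for each real `K`, and the corresponding physical
wavenumber `k_FD4 = (2/h) arcsin(s(K))` satisfies
`k_FD4 = k_ex (1 + (3/640)K⁴ − (1/3584)K⁶ + O(K⁸))` as `K → 0`, `K = k_ex h`. -/
theorem fd4_dispersion_expansion :
    (∀ K : ℝ, ∃! s : ℝ, s ^ 3 / 6 + s = K / 2) ∧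
    ∀ s : ℝ → ℝ, (∀ K : ℝ, s K ^ 3 / 6 + s K = K / 2) →
      ∀ h : ℝ, 0 < h →
        (fun K : ℝ => (2 / h) * Real.arcsin (s K) -
            (K / h) * (1 + (3 / 640) * K ^ 4 - (1 / 3584) * K ^ 6))
          =O[nhds 0] fun K : ℝ => K ^ 9 := by
  refine ⟨fun K => bijective_cube_div_six_add_self.existsUnique (K / 2), fun s hs h _ => ?_⟩
  have hsK (K : ℝ) : fd4Wavenumber (s K) = K := by unfold fd4Wavenumber; linarith [hs K]
  have hsO : s =O[𝓝 0] id := .of_bound (1 / 2) <| .of_forall fun K => by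
    simpa [div_eq_inv_mul] using abs_le_half_abs_of_cube_div_six_add_self_eq (hs K)
  have hs0 : Tendsto s (𝓝 0) (𝓝 0) := hsO.trans_tendsto tendsto_id
  refine (((isBigO_two_mul_arcsin_sub_fd4Series.comp_tendsto hs0).trans (hsO.pow 9)).const_mul_left
    h⁻¹).congr_left fun K => ?_
  simp only [Function.comp_apply, hsK, fd4Series]
  ring
end
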